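/- arXiv:2011.10375 — 7 statements merged into one kernel-verified Lean document; each statement's English description precedes it below -/
import Mathlib

section
/- Let p be a prime, r ≥ 1, and let L be a finite field extension of Q_p with normalized additive valuation v_L (so v_L(L^×) = Z); set e = v_L(p). Suppose (c_n) is a family of elements of Q_p indexed by nonzero multi-indices n = (n_1,…,n_r) ∈ ℕ^r such that gcd(n_1,…,n_r)·c_n ∈ Z_p for every n. Let x = (x_1,…,x_r) ∈ L^r satisfy v_L(x_i) > 0 for all i. Then for every nonzero n one has v_L(c_n·x_1^{n_1}⋯x_r^{n_r}) ≥ |n|·min_i v_L(x_i) − e·log_p(|n|), where |n| = n_1 + ⋯ + n_r; in particular v_L(c_n x^n) → ∞ as |n| → ∞, so the family (c_n x^n) is summable in L. -/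
/-!
Since `gcd n · c_n ∈ ℤ_p` and `p ^ v_p(gcd n) ≤ gcd n ≤ |n|`, we get
`v(c_n) = e · v_p(c_n) ≥ -e · log_p |n|`, while `v(x^n) ≥ |n| · min_i v(x_i)`. The linear term
beats the logarithm and only finitely many `n` have bounded `|n|`, so `v(c_n x^n) → ∞`. As `v`
is order-reversing for the norm and satisfies the ultrametric inequality, the norm is
nonarchimedean and a uniformizer (an element of valuation `1`) shows that the terms tend to `0`,
which gives summability in the complete field `L`.
-/

open Filter Topology

theorem Padic.neg_logb_le_valuation {p : ℕ} [Fact p.Prime] {c : ℚ_[p]} (hc : c ≠ 0) {g N : ℕ}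
    (hg : 0 < g) (hgN : g ≤ N) (h : ‖(g : ℚ_[p]) * c‖ ≤ 1) :
    -Real.logb p N ≤ c.valuation := by
  have hval : 0 ≤ (padicValNat p g : ℤ) + c.valuation := by
    rwa [Padic.norm_le_one_iff_val_nonneg, Padic.valuation_mul (Nat.cast_ne_zero.2 hg.ne') hc,
      Padic.valuation_natCast] at h
  have hlog : (padicValNat p g : ℝ) ≤ Real.logb p N :=
    calc (padicValNat p g : ℝ) ≤ Nat.log p g := Nat.cast_le.2 (padicValNat_le_nat_log g)
      _ ≤ Real.logb p g := Real.natLog_le_logb g p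
      _ ≤ Real.logb p N := Real.logb_le_logb_of_le
          (by exact_mod_cast (Fact.out : p.Prime).one_lt) (by positivity) (by exact_mod_cast hgN)
  have hval' : (0 : ℝ) ≤ ((padicValNat p g : ℤ) : ℝ) + c.valuation := by exact_mod_cast hval
  rw [Int.cast_natCast] at hval'
  linarith

section MultiIndex

variable {ι : Type*} [Fintype ι] {n : ι → ℕ}

theorem Finset.univ_gcd_pos (hn : n ≠ 0) : 0 < Finset.univ.gcd n := by
  obtain ⟨i, hi⟩ := Function.ne_iff.1 hn
  exact Nat.pos_of_ne_zero fun h => hi (Finset.gcd_eq_zero_iff.1 h i (Finset.mem_univ i))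

theorem Finset.univ_gcd_le_sum (hn : n ≠ 0) : Finset.univ.gcd n ≤ ∑ i, n i := by
  obtain ⟨i, hi⟩ := Function.ne_iff.1 hn
  calc Finset.univ.gcd n ≤ n i :=
        Nat.le_of_dvd (Nat.pos_of_ne_zero hi) (Finset.gcd_dvd (Finset.mem_univ i))
    _ ≤ ∑ j, n j := Finset.single_le_sum (fun j _ => Nat.zero_le (n j)) (Finset.mem_univ i)

variable (ι) in
theorem tendsto_sum_cofinite_atTop : Tendsto (fun n : ι → ℕ => ∑ i, n i) cofinite atTop := by
  refine tendsto_atTop.2 fun B => eventually_cofinite.2 ?_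
  refine (Set.Finite.pi (t := fun _ : ι => Set.Iic B) fun _ => Set.finite_Iic B).subset ?_
  intro n hn i _
  exact (Finset.single_le_sum (fun j _ => Nat.zero_le (n j)) (Finset.mem_univ i)).trans
    (le_of_not_ge hn)

end MultiIndex

theorem tendsto_mul_sub_logb_atTop {μ : ℝ} (hμ : 0 < μ) (a b : ℝ) :
    Tendsto (fun X => X * μ - a * Real.logb b X) atTop atTop := by
  have hlogb : Tendsto (fun X => Real.logb b X / X) atTop (𝓝 0) := by
    simpa [Real.logb, div_right_comm] using
      (Real.isLittleO_log_id_atTop.tendsto_div_nhds_zero).div_const (Real.log b)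
  have hfactor : Tendsto (fun X => μ - a * (Real.logb b X / X)) atTop (𝓝 μ) := by
    simpa using (hlogb.const_mul a).const_sub μ
  refine (tendsto_id.atTop_mul_pos hμ hfactor).congr' ?_
  filter_upwards [eventually_ne_atTop 0] with X hX
  simp only [id_eq]
  field_simp

theorem EReal.tendsto_natCast_mul_sub_logb {m : EReal} (hm : 0 < m) (a b : ℝ) :
    Tendsto (fun N : ℕ => (N : EReal) * m - ((a * Real.logb b N : ℝ) : EReal)) atTop (𝓝 ⊤) := by
  induction m using EReal.rec with
  | bot => exact absurd hm not_lt_bot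
  | coe μ =>
    have hreal := (tendsto_mul_sub_logb_atTop (EReal.coe_pos.1 hm) a b).comp
      tendsto_natCast_atTop_atTop
    refine (EReal.tendsto_coe_nhds_top_iff.2 hreal).congr fun N => ?_
    rw [Function.comp_apply, EReal.coe_sub, EReal.coe_mul, EReal.coe_coe_eq_natCast]
  | top =>
    refine tendsto_const_nhds.congr' ?_
    filter_upwards [eventually_gt_atTop 0] with N hN
    rw [EReal.mul_top_of_pos (by exact_mod_cast hN), EReal.top_sub_coe]

section Valuation

variable {K : Type*} [NormedField K] {v : K → EReal}

theorem map_prod_pow_of_map_mul (hv_mul : ∀ a b : K, v (a * b) = v a + v b) (hv_one : v 1 = 0)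
    {ι : Type*} (s : Finset ι) (f : ι → K) (n : ι → ℕ) :
    v (∏ i ∈ s, f i ^ n i) = ∑ i ∈ s, n i • v (f i) := by
  let φ : K →* Multiplicative EReal :=
    { toFun := fun z => Multiplicative.ofAdd (v z), map_one' := hv_one ▸ rfl, map_mul' := hv_mul }
  change Multiplicative.toAdd (φ _) = _
  simp only [map_prod, map_pow, toAdd_prod, toAdd_pow]
  rfl

theorem natCast_sum_mul_le_map_prod_pow (hv_mul : ∀ a b : K, v (a * b) = v a + v b)
    (hv_one : v 1 = 0) {ι : Type*} {s : Finset ι} {f : ι → K} {m : EReal}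
    (hm : ∀ i ∈ s, m ≤ v (f i)) (n : ι → ℕ) :
    ((∑ i ∈ s, n i : ℕ) : EReal) * m ≤ v (∏ i ∈ s, f i ^ n i) := by
  rw [map_prod_pow_of_map_mul hv_mul hv_one, ← EReal.nsmul_eq_mul, Finset.sum_smul]
  exact Finset.sum_le_sum fun i hi => nsmul_le_nsmul_right (hm i hi) (n i)

theorem isUltrametricDist_of_map (hv_add : ∀ a b : K, min (v a) (v b) ≤ v (a + b))
    (hv_norm : ∀ a b : K, v a ≤ v b ↔ ‖b‖ ≤ ‖a‖) : IsUltrametricDist K := by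
  refine .isUltrametricDist_of_forall_norm_add_le_max_norm fun a b => ?_
  rcases le_total (v a) (v b) with h | h
  · exact le_max_of_le_left ((hv_norm _ _).1 ((min_eq_left h).symm.le.trans (hv_add a b)))
  · exact le_max_of_le_right ((hv_norm _ _).1 ((min_eq_right h).symm.le.trans (hv_add a b)))

theorem norm_lt_norm_of_map_lt (hv_norm : ∀ a b : K, v a ≤ v b ↔ ‖b‖ ≤ ‖a‖) {a b : K}
    (h : v a < v b) : ‖b‖ < ‖a‖ :=
  (lt_iff_lt_of_le_iff_le (hv_norm b a)).1 h

theorem tendsto_nhds_zero_of_tendsto_map_top (hv_top : ∀ z : K, v z = ⊤ ↔ z = 0)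
    (hv_norm : ∀ a b : K, v a ≤ v b ↔ ‖b‖ ≤ ‖a‖) {z : K} (hz0 : z ≠ 0) (hz1 : ‖z‖ < 1)
    {α : Type*} {l : Filter α} {f : α → K} (hf : Tendsto (fun i => v (f i)) l (𝓝 ⊤)) :
    Tendsto f l (𝓝 0) := by
  refine NormedAddGroup.tendsto_nhds_zero.2 fun ε hε => ?_
  obtain ⟨k, hk⟩ := exists_pow_lt_of_lt_one hε hz1
  obtain ⟨t, ht, -⟩ := EReal.lt_iff_exists_real_btwn.1
    (lt_top_iff_ne_top.2 (mt (hv_top _).1 (pow_ne_zero k hz0)))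
  filter_upwards [EReal.tendsto_nhds_top_iff_real.1 hf t] with i hi
  calc ‖f i‖ < ‖z ^ k‖ := norm_lt_norm_of_map_lt hv_norm (ht.trans hi)
    _ = ‖z‖ ^ k := norm_pow z k
    _ < ε := hk

end Valuation

theorem valuation_bound_and_summable_of_gcd_int_general
    {p : ℕ} [Fact p.Prime] {r : ℕ} (hr : 0 < r)
    {L : Type*} [NormedField L] [CompleteSpace L]
    [Algebra ℚ_[p] L]
    (v : L → EReal)
    (hv_top : ∀ z : L, v z = ⊤ ↔ z = 0)
    (hv_mul : ∀ a b : L, v (a * b) = v a + v b)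
    (hv_add : ∀ a b : L, min (v a) (v b) ≤ v (a + b))
    (hv_surj : ∀ k : ℤ, ∃ z : L, v z = ((k : ℝ) : EReal))
    (hv_norm : ∀ a b : L, v a ≤ v b ↔ ‖b‖ ≤ ‖a‖)
    (e : ℤ) (he : v ((p : L)) = ((e : ℝ) : EReal))
    (hQp : ∀ q : ℚ_[p], q ≠ 0 →
      v (algebraMap ℚ_[p] L q) = (((e * q.valuation : ℤ) : ℝ) : EReal))
    (c : {n : Fin r → ℕ // n ≠ 0} → ℚ_[p])
    (hc : ∀ n : {n : Fin r → ℕ // n ≠ 0},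
      ‖((Finset.univ.gcd n.1 : ℕ) : ℚ_[p]) * c n‖ ≤ 1)
    (x : Fin r → L) (hx : ∀ i, (0 : EReal) < v (x i)) :
    (∀ n : {n : Fin r → ℕ // n ≠ 0},
      (((∑ i, n.1 i : ℕ) : EReal)
          * (Finset.univ.inf' (Finset.univ_nonempty_iff.mpr (Fin.pos_iff_nonempty.mp hr))
              fun i => v (x i)))
        - (((e : ℝ) * Real.logb p (∑ i, n.1 i) : ℝ) : EReal)
        ≤ v (algebraMap ℚ_[p] L (c n) * ∏ i, x i ^ n.1 i)) ∧
    Tendsto (fun n : {n : Fin r → ℕ // n ≠ 0} =>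
        v (algebraMap ℚ_[p] L (c n) * ∏ i, x i ^ n.1 i)) cofinite (nhds ⊤) ∧
    Summable (fun n : {n : Fin r → ℕ // n ≠ 0} =>
      algebraMap ℚ_[p] L (c n) * ∏ i, x i ^ n.1 i) := by
  have hv_one : v 1 = 0 := by simpa using hQp 1 one_ne_zero
  have := isUltrametricDist_of_map hv_add hv_norm
  have he0 : (0 : ℝ) ≤ e := by
    have hp := (hv_norm 1 p).2 (by simpa using IsUltrametricDist.norm_natCast_le_one L p)
    rw [hv_one, he] at hp
    exact_mod_cast hp
  set m := Finset.univ.inf' _ fun i => v (x i)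
  have hm : 0 < m := (Finset.lt_inf'_iff _).2 fun i _ => hx i
  have bound : ∀ n : {n : Fin r → ℕ // n ≠ 0},
      ((∑ i, n.1 i : ℕ) : EReal) * m - (((e : ℝ) * Real.logb p (∑ i, n.1 i : ℕ) : ℝ) : EReal)
        ≤ v (algebraMap ℚ_[p] L (c n) * ∏ i, x i ^ n.1 i) := by
    intro n
    by_cases hcn : c n = 0
    · simp [hcn, (hv_top 0).2 rfl]
    rw [hv_mul, hQp _ hcn, sub_eq_add_neg, add_comm]
    refine add_le_add ?_ (natCast_sum_mul_le_map_prod_pow hv_mul hv_one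
      (fun i _ => Finset.inf'_le _ (Finset.mem_univ i)) n.1)
    rw [← EReal.coe_neg, EReal.coe_le_coe_iff, Int.cast_mul, neg_mul_eq_mul_neg]
    exact mul_le_mul_of_nonneg_left (Padic.neg_logb_le_valuation hcn
      (Finset.univ_gcd_pos n.2) (Finset.univ_gcd_le_sum n.2) (hc n)) he0
  have htop := tendsto_nhds_top_mono ((EReal.tendsto_natCast_mul_sub_logb hm e p).comp
      ((tendsto_sum_cofinite_atTop (Fin r)).comp Subtype.val_injective.tendsto_cofinite))
    (Eventually.of_forall bound)
  obtain ⟨z, hz⟩ := hv_surj 1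
  have hz0 : z ≠ 0 := fun h => EReal.coe_ne_top _ (by rw [← hz, h, (hv_top 0).2 rfl])
  have hz1 : ‖z‖ < 1 := by
    simpa using norm_lt_norm_of_map_lt hv_norm (a := 1) (b := z) (by simp [hv_one, hz])
  refine ⟨fun n => ?_, htop, NonarchimedeanAddGroup.summable_of_tendsto_cofinite_zero
    (tendsto_nhds_zero_of_tendsto_map_top hv_top hv_norm hz0 hz1 htop)⟩
  simpa using bound n

/-- Let `L/ℚ_p` be a finite extension with normalized additive valuation
`v` (integer-valued on `L^×`, `v = e·v_p` on `ℚ_p`, compatible with the norm topology).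
If `gcd(n)·c_n ∈ ℤ_p` for all nonzero multi-indices `n` and `v(x_i) > 0` for all `i`, then
`v(c_n x^n) ≥ |n|·min_i v(x_i) − e·log_p |n|`; in particular `v(c_n x^n) → ∞` as
`|n| → ∞`, and the family `(c_n x^n)` is summable in `L`. -/
theorem valuation_bound_and_summable_of_gcd_int
    {p : ℕ} [Fact p.Prime] {r : ℕ} (hr : 0 < r)
    {L : Type*} [NormedField L] [CompleteSpace L]
    [Algebra ℚ_[p] L] [FiniteDimensional ℚ_[p] L]
    (v : L → EReal)
    (hv_top : ∀ z : L, v z = ⊤ ↔ z = 0)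
    (hv_mul : ∀ a b : L, v (a * b) = v a + v b)
    (hv_add : ∀ a b : L, min (v a) (v b) ≤ v (a + b))
    (hv_int : ∀ z : L, z ≠ 0 → ∃ k : ℤ, v z = ((k : ℝ) : EReal))
    (hv_surj : ∀ k : ℤ, ∃ z : L, v z = ((k : ℝ) : EReal))
    (hv_norm : ∀ a b : L, v a ≤ v b ↔ ‖b‖ ≤ ‖a‖)
    (e : ℤ) (he : v ((p : L)) = ((e : ℝ) : EReal))
    (hQp : ∀ q : ℚ_[p], q ≠ 0 →
      v (algebraMap ℚ_[p] L q) = (((e * q.valuation : ℤ) : ℝ) : EReal))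
    (c : {n : Fin r → ℕ // n ≠ 0} → ℚ_[p])
    (hc : ∀ n : {n : Fin r → ℕ // n ≠ 0},
      ‖((Finset.univ.gcd n.1 : ℕ) : ℚ_[p]) * c n‖ ≤ 1)
    (x : Fin r → L) (hx : ∀ i, (0 : EReal) < v (x i)) :
    (∀ n : {n : Fin r → ℕ // n ≠ 0},
      (((∑ i, n.1 i : ℕ) : EReal)
          * (Finset.univ.inf' (Finset.univ_nonempty_iff.mpr (Fin.pos_iff_nonempty.mp hr))
              fun i => v (x i)))
        - (((e : ℝ) * Real.logb p (∑ i, n.1 i) : ℝ) : EReal)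
        ≤ v (algebraMap ℚ_[p] L (c n) * ∏ i, x i ^ n.1 i)) ∧
    Tendsto (fun n : {n : Fin r → ℕ // n ≠ 0} =>
        v (algebraMap ℚ_[p] L (c n) * ∏ i, x i ^ n.1 i)) cofinite (nhds ⊤) ∧
    Summable (fun n : {n : Fin r → ℕ // n ≠ 0} =>
      algebraMap ℚ_[p] L (c n) * ∏ i, x i ^ n.1 i) :=
  valuation_bound_and_summable_of_gcd_int_general hr v hv_top hv_mul hv_add hv_surj hv_norm e he hQp
    c hc x hx
end

section
/- Let p be a prime and r ≥ 1. Let f = (f_1,…,f_r) and g = (g_1,…,g_r) be r-tuples of formal power series in the variables X = (X_1,…,X_r) over Q_p with zero constant terms such that f(g(X)) = X componentwise. Assume that the Jacobian matrix J_g(X) has all entries in Z_p[[X_1,…,X_r]] and that J_g(0) = 1 (the identity matrix). Then for every s ∈ ℕ and all indices i, n_1,…,n_s ∈ {1,…,r}, the iterated partial derivative (∂^s f_i/∂X_{n_1}⋯∂X_{n_s})(0) lies in Z_p. -/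
/-!
Call `F` Hurwitz-integral over a subring `O` when `e! * coeff e F ∈ O` for every `e`; since
`e! * coeff e F = ∂^e F (0)`, these are the series whose iterated partial derivatives at `0` lie
in `O`. They form a subring, and `F` belongs to it as soon as `F(0) ∈ O` and every `∂_j F` does.
Hence if `G(0) = 0` and the `∂_j G` are Hurwitz-integral, so are the divided powers `G^m / m!`,
because `∂_j (G^(m+1) / (m+1)!) = (G^m / m!) * ∂_j G`.

As `g = X + O(X²)`, the coefficient of `X^e` in `g^n = ∏ g_k^(n_k)` is `δ_(e,n)` whenever
`|e| ≤ |n|`. Comparing coefficients of `X^e` in `f(g(X)) = X` therefore writes `e! * coeff e f_i`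
as `e! * coeff e X_i` minus a sum of products `(e'! * coeff e' f_i) * (e! * coeff e (g^e' / e'!))`
over `|e'| < |e|`, and induction on `|e|` shows that it lies in `ℤ_p`.
-/

/-- Substitution of a tuple `g` of formal power series (each with zero constant term)
into a formal power series `f`. -/
noncomputable def msubst {σ τ : Type*} [Fintype σ] [DecidableEq σ] {R : Type*} [CommRing R]
    (g : σ → MvPowerSeries τ R) (f : MvPowerSeries σ R) : MvPowerSeries τ R :=
  fun d =>
    ∑ e ∈ Finset.Icc (0 : σ →₀ ℕ)
        (Finsupp.equivFunOnFinite.symm fun _ => d.sum fun _ k => k),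
      MvPowerSeries.coeff e f * MvPowerSeries.coeff d (∏ s : σ, g s ^ e s)

/-- Formal partial derivative `∂f/∂X_j` of a multivariate formal power series. -/
noncomputable def pder {R : Type*} [CommSemiring R] {σ : Type*} [DecidableEq σ]
    (j : σ) (f : MvPowerSeries σ R) : MvPowerSeries σ R :=
  fun d => ((d j + 1 : ℕ) : R) * MvPowerSeries.coeff (d + Finsupp.single j 1) f

open MvPowerSeries Finsupp

namespace Finsupp

variable {σ : Type*}

def factorial (e : σ →₀ ℕ) : ℕ := e.prod fun _ n => n.factorial

@[simp]
theorem factorial_zero : (0 : σ →₀ ℕ).factorial = 1 := prod_zero_index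

theorem factorial_pos (e : σ →₀ ℕ) : 0 < e.factorial :=
  Finset.prod_pos fun _ _ => Nat.factorial_pos _

theorem factorial_add_single [DecidableEq σ] (e : σ →₀ ℕ) (j : σ) :
    (e + single j 1).factorial = (e j + 1) * e.factorial := by
  have h0 : ∀ i : σ, (fun _ n => n.factorial : σ → ℕ → ℕ) i 0 = 1 := fun _ => rfl
  have herase : (e + single j 1).erase j = e.erase j := by
    ext i
    rcases eq_or_ne i j with rfl | h <;> simp [*]
  unfold factorial
  rw [← mul_prod_erase' _ j _ h0, ← mul_prod_erase' e j _ h0, ← mul_assoc, herase]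
  simp [Nat.factorial_succ]

theorem factorial_eq_prod [Fintype σ] (e : σ →₀ ℕ) : e.factorial = ∏ i, (e i).factorial :=
  prod_fintype _ _ fun _ => rfl

theorem eq_zero_or_exists_eq_add_single (e : σ →₀ ℕ) :
    e = 0 ∨ ∃ d j, e = d + single j 1 := by
  rcases eq_or_ne e 0 with h | h
  · exact .inl h
  obtain ⟨j, hj⟩ := ne_iff.1 h
  refine .inr ⟨e - single j 1, j, (tsub_add_cancel_of_le ?_).symm⟩
  simpa [Nat.one_le_iff_ne_zero] using hj

end Finsupp

namespace MvPowerSeries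

variable {σ R : Type*}

section Derivatives

variable [CommSemiring R] [DecidableEq σ]

theorem pder_eq_pderiv (j : σ) (F : MvPowerSeries σ R) : pder j F = pderiv R j F := by
  ext d
  rw [coeff_pderiv, mul_comm, ← Nat.cast_succ]
  rfl

theorem factorial_mul_coeff_pderiv (j : σ) (F : MvPowerSeries σ R) (d : σ →₀ ℕ) :
    (d.factorial : R) * coeff d (pderiv R j F) =
      ((d + single j 1).factorial : R) * coeff (d + single j 1) F := by
  rw [coeff_pderiv, factorial_add_single]
  push_cast
  ring

theorem factorial_mul_coeff_foldl_pder (L : List σ) (F : MvPowerSeries σ R) (d : σ →₀ ℕ) :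
    (d.factorial : R) * coeff d (L.foldl (fun h j => pder j h) F) =
      ((d + (L.map fun j => single j 1).sum).factorial : R) *
        coeff (d + (L.map fun j => single j 1).sum) F := by
  induction L generalizing F d with
  | nil => simp
  | cons j L ih =>
    rw [List.foldl_cons, ih, pder_eq_pderiv, factorial_mul_coeff_pderiv, List.map_cons,
      List.sum_cons, add_assoc, add_comm (single j 1)]

theorem constantCoeff_foldl_pder (L : List σ) (F : MvPowerSeries σ R) :
    constantCoeff (L.foldl (fun h j => pder j h) F) =
      ((L.map fun j => single j 1).sum.factorial : R) *
        coeff (L.map fun j => single j 1).sum F := by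
  simpa using factorial_mul_coeff_foldl_pder L F 0

end Derivatives

section Hurwitz

variable [CommRing R] (O : Subring R)

theorem factorial_mul_coeff_mul_mem {F G : MvPowerSeries σ R}
    (hF : ∀ e, (e.factorial : R) * coeff e F ∈ O)
    (hG : ∀ e, (e.factorial : R) * coeff e G ∈ O) (e : σ →₀ ℕ) :
    (e.factorial : R) * coeff e (F * G) ∈ O := by
  classical
  induction e using WellFoundedLT.induction generalizing F G with
  | ind e ih =>
    obtain rfl | ⟨d, j, rfl⟩ := eq_zero_or_exists_eq_add_single e
    · simpa using O.mul_mem (by simpa using hF 0) (by simpa using hG 0)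
    have hd : d < d + single j 1 := lt_add_of_pos_right _ (by simp [pos_iff_ne_zero])
    have hpderiv : ∀ H : MvPowerSeries σ R, (∀ e, (e.factorial : R) * coeff e H ∈ O) →
        ∀ e, (e.factorial : R) * coeff e (pderiv R j H) ∈ O := fun H hH e => by
      rw [factorial_mul_coeff_pderiv]
      exact hH _
    rw [← factorial_mul_coeff_pderiv, Derivation.leibniz, smul_eq_mul, smul_eq_mul, map_add,
      mul_add]
    exact O.add_mem (ih d hd hF (hpderiv G hG)) (ih d hd hG (hpderiv F hF))

def hurwitzSubring : Subring (MvPowerSeries σ R) where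
  carrier := {F | ∀ e, (e.factorial : R) * coeff e F ∈ O}
  mul_mem' hF hG := factorial_mul_coeff_mul_mem O hF hG
  one_mem' e := by
    classical
    rw [coeff_one]
    split_ifs with h <;> simp [h]
  add_mem' hF hG e := by simpa [mul_add] using O.add_mem (hF e) (hG e)
  zero_mem' e := by simp
  neg_mem' hF e := by simpa using O.neg_mem (hF e)

variable {O}

theorem mem_hurwitzSubring_of_coeff_mem {F : MvPowerSeries σ R} (hF : ∀ e, coeff e F ∈ O) :
    F ∈ hurwitzSubring O :=
  fun e => O.mul_mem (natCast_mem O _) (hF e)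

theorem mem_hurwitzSubring_of_pderiv_mem [DecidableEq σ] {F : MvPowerSeries σ R}
    (h0 : constantCoeff F ∈ O) (hF : ∀ j, pderiv R j F ∈ hurwitzSubring O) :
    F ∈ hurwitzSubring O := by
  intro e
  obtain rfl | ⟨d, j, rfl⟩ := eq_zero_or_exists_eq_add_single e
  · simpa using h0
  · rw [← factorial_mul_coeff_pderiv]
    exact hF j d

end Hurwitz

section HomogeneousComponent

variable [CommSemiring R]

theorem homogeneousComponent_zero_one :
    homogeneousComponent 0 (1 : MvPowerSeries σ R) = 1 := by
  classical
  ext d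
  by_cases hd : d = 0 <;> simp [coeff_homogeneousComponent, coeff_one, hd, degree_eq_zero_iff]

theorem homogeneousComponent_prod_of_le_order {ι : Type*} (s : Finset ι)
    (f : ι → MvPowerSeries σ R) (p : ι → ℕ) (h : ∀ i ∈ s, (p i : ℕ∞) ≤ (f i).order) :
    homogeneousComponent (∑ i ∈ s, p i) (∏ i ∈ s, f i) =
      ∏ i ∈ s, homogeneousComponent (p i) (f i) := by
  classical
  induction s using Finset.induction_on with
  | empty => simpa using homogeneousComponent_zero_one
  | insert a s ha ih =>
    have hs : ((∑ i ∈ s, p i : ℕ) : ℕ∞) ≤ (∏ i ∈ s, f i).order := by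
      push_cast
      exact (Finset.sum_le_sum fun i hi => h i (Finset.mem_insert_of_mem hi)).trans
        (le_order_prod f s)
    rw [Finset.sum_insert ha, Finset.prod_insert ha, Finset.prod_insert ha,
      homogeneousComponent_mul_of_le_order (h a (Finset.mem_insert_self a s)) hs,
      ih fun i hi => h i (Finset.mem_insert_of_mem hi)]

theorem homogeneousComponent_pow_of_le_order {f : MvPowerSeries σ R} {p : ℕ}
    (h : (p : ℕ∞) ≤ f.order) (m : ℕ) :
    homogeneousComponent (m * p) (f ^ m) = homogeneousComponent p f ^ m := by
  simpa using homogeneousComponent_prod_of_le_order (Finset.range m) (fun _ => f) (fun _ => p)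
    fun _ _ => h

theorem homogeneousComponent_one_eq_X [DecidableEq σ] {G : MvPowerSeries σ R} {k : σ}
    (hG : ∀ j, coeff (single j 1) G = if k = j then 1 else 0) :
    homogeneousComponent 1 G = X k := by
  ext d
  rw [coeff_homogeneousComponent, coeff_X]
  split_ifs with h1 h2 h2
  · rw [h2, hG, if_pos rfl]
  · obtain ⟨j, rfl⟩ := (sum_eq_one_iff d).1 h1
    rw [hG, if_neg]
    rintro rfl
    exact h2 rfl
  · subst h2
    simp at h1
  · rfl

theorem coeff_prod_pow_of_degree_le [DecidableEq σ] [Fintype σ] {g : σ → MvPowerSeries σ R}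
    (hg0 : ∀ k, constantCoeff (g k) = 0)
    (hg1 : ∀ k j, coeff (single j 1) (g k) = if k = j then 1 else 0)
    {n e : σ →₀ ℕ} (he : e.degree ≤ n.degree) :
    coeff e (∏ k, g k ^ n k) = if e = n then 1 else 0 := by
  have hord : ∀ k, ((n k : ℕ) : ℕ∞) ≤ (g k ^ n k).order := fun k =>
    le_order_pow_of_constantCoeff_eq_zero _ (hg0 k)
  rcases he.lt_or_eq with hlt | heq
  · rw [coeff_of_lt_order, if_neg (by rintro rfl; exact hlt.false)]
    refine lt_of_lt_of_le (ENat.natCast_lt_natCast.2 hlt) ((le_of_eq ?_).trans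
      ((Finset.sum_le_sum fun k _ => hord k).trans (le_order_prod _ _)))
    rw [degree_eq_sum]
    push_cast
    rfl
  · have hcomp : homogeneousComponent n.degree (∏ k, g k ^ n k) = monomial n 1 := by
      rw [degree_eq_sum, homogeneousComponent_prod_of_le_order _ _ _ fun k _ => hord k]
      have hX : ∀ k, homogeneousComponent (n k) (g k ^ n k) = monomial (single k (n k)) 1 := by
        intro k
        have := homogeneousComponent_pow_of_le_order
          ((one_le_order_iff_constCoeff_eq_zero).2 (hg0 k)) (n k)
        rwa [mul_one, homogeneousComponent_one_eq_X (hg1 k), X_pow_eq] at this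
      simp only [hX, prod_monomial, univ_sum_single, Finset.prod_const_one]
    simpa [coeff_homogeneousComponent, heq, coeff_monomial] using congrArg (coeff e) hcomp

end HomogeneousComponent

section DividedPowers

variable {K : Type*} [Field K] [CharZero K] {O : Subring K} [DecidableEq σ]

theorem inv_factorial_smul_pow_mem_hurwitzSubring {G : MvPowerSeries σ K}
    (hG0 : constantCoeff G = 0) (hG : ∀ j, pderiv K j G ∈ hurwitzSubring O) (m : ℕ) :
    ((m.factorial : K)⁻¹ • G ^ m) ∈ hurwitzSubring O := by
  induction m with
  | zero => simp [one_mem]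
  | succ m ih =>
    refine mem_hurwitzSubring_of_pderiv_mem (by simp [hG0]) fun j => ?_
    have hderiv : pderiv K j (((m + 1).factorial : K)⁻¹ • G ^ (m + 1)) =
        ((m.factorial : K)⁻¹ • G ^ m) * pderiv K j G := by
      have hscalar : C ((m + 1).factorial : K)⁻¹ * ((m + 1 : ℕ) : MvPowerSeries σ K) =
          C (m.factorial : K)⁻¹ := by
        rw [← map_natCast C, ← map_mul, Nat.factorial_succ, Nat.cast_mul, mul_inv, mul_comm,
          ← mul_assoc, mul_inv_cancel₀ (Nat.cast_ne_zero.2 m.succ_ne_zero), one_mul]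
      rw [(pderiv K j).map_smul, pderiv_pow, smul_eq_C_mul, smul_eq_C_mul, Nat.add_sub_cancel]
      linear_combination (G ^ m * pderiv K j G) * hscalar
    rw [hderiv]
    exact mul_mem ih (hG j)

theorem inv_factorial_smul_prod_pow_mem_hurwitzSubring [Fintype σ] {g : σ → MvPowerSeries σ K}
    (hg0 : ∀ k, constantCoeff (g k) = 0)
    (hg : ∀ k j, pderiv K j (g k) ∈ hurwitzSubring O) (n : σ →₀ ℕ) :
    ((n.factorial : K)⁻¹ • ∏ k, g k ^ n k) ∈ hurwitzSubring O := by
  have hprod : (n.factorial : K)⁻¹ • ∏ k, g k ^ n k =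
      ∏ k, (((n k).factorial : K)⁻¹ • g k ^ n k) := by
    simp only [smul_eq_C_mul, Finset.prod_mul_distrib, ← map_prod, factorial_eq_prod,
      Nat.cast_prod, Finset.prod_inv_distrib]
  rw [hprod]
  exact prod_mem fun k _ => inv_factorial_smul_pow_mem_hurwitzSubring (hg0 k) (hg k) (n k)

end DividedPowers

section Inversion

variable {K : Type*} [Field K] [CharZero K] {O : Subring K} [DecidableEq σ] [Fintype σ]
  {g : σ → MvPowerSeries σ K}

theorem mem_hurwitzSubring_of_msubst_eq_X (hg0 : ∀ k, constantCoeff (g k) = 0)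
    (hg1 : ∀ k j, coeff (single j 1) (g k) = if k = j then 1 else 0)
    (hg : ∀ k j, pderiv K j (g k) ∈ hurwitzSubring O)
    {F : MvPowerSeries σ K} {i : σ} (hF : msubst g F = X i) : F ∈ hurwitzSubring O := by
  intro e
  induction hd : e.degree using Nat.strong_induction_on generalizing e with
  | _ N ih =>
  subst hd
  set S := Finset.Icc (0 : σ →₀ ℕ) (equivFunOnFinite.symm fun _ => e.sum fun _ k => k)
  have he : e ∈ S := by
    simp only [S, Finset.mem_Icc, zero_le, true_and, le_def, coe_equivFunOnFinite_symm]
    exact fun m => le_degree m e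
  have hsplit : coeff e (X i) = coeff e F +
      ∑ e' ∈ S with e'.degree < e.degree, coeff e' F * coeff e (∏ k, g k ^ e' k) := by
    rw [← hF]
    show ∑ e' ∈ S, _ = _
    rw [← Finset.sum_filter_not_add_sum_filter S (fun e' => e'.degree < e.degree)]
    congr 1
    rw [Finset.sum_eq_single_of_mem e (by simp [he]),
      coeff_prod_pow_of_degree_le hg0 hg1 le_rfl, if_pos rfl, mul_one]
    intro e' he' hne
    rw [Finset.mem_filter, not_lt] at he'
    rw [coeff_prod_pow_of_degree_le hg0 hg1 he'.2, if_neg (Ne.symm hne), mul_zero]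
  have hfactor : ∀ e', (e.factorial : K) * (coeff e' F * coeff e (∏ k, g k ^ e' k)) =
      ((e'.factorial : K) * coeff e' F) *
        ((e.factorial : K) * coeff e ((e'.factorial : K)⁻¹ • ∏ k, g k ^ e' k)) := fun e' => by
    have := Nat.cast_ne_zero (R := K).2 (factorial_pos e').ne'
    rw [coeff_smul]
    field_simp
  have hcoeff : (e.factorial : K) * coeff e F = e.factorial * coeff e (X i) -
      ∑ e' ∈ S with e'.degree < e.degree, ((e'.factorial : K) * coeff e' F) *
        ((e.factorial : K) * coeff e ((e'.factorial : K)⁻¹ • ∏ k, g k ^ e' k)) := by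
    simp only [hsplit, mul_add, Finset.mul_sum, hfactor, add_sub_cancel_right]
  rw [hcoeff]
  refine O.sub_mem ?_ (O.sum_mem fun e' he' => O.mul_mem ?_ ?_)
  · rw [coeff_X]
    split_ifs <;> simp [natCast_mem]
  · exact ih _ (Finset.mem_filter.1 he').2 e' rfl
  · exact inv_factorial_smul_prod_pow_mem_hurwitzSubring hg0 hg e' e

end Inversion

end MvPowerSeries

theorem iterated_pderiv_at_zero_int_of_left_inverse_general
    {p : ℕ} [Fact p.Prime] {r : ℕ}
    (f g : Fin r → MvPowerSeries (Fin r) ℚ_[p])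
    (hg0 : ∀ i, MvPowerSeries.constantCoeff (g i) = 0)
    (hfg : ∀ i, msubst g (f i) = MvPowerSeries.X i)
    (hJg_int : ∀ (i j : Fin r) (d : Fin r →₀ ℕ),
      ‖MvPowerSeries.coeff d (pder j (g i))‖ ≤ 1)
    (hJg0 : ∀ i j, MvPowerSeries.coeff (Finsupp.single j 1) (g i)
      = if i = j then 1 else 0) :
    ∀ (s : ℕ) (i : Fin r) (ns : Fin s → Fin r),
      ‖MvPowerSeries.constantCoeff
        ((List.ofFn ns).foldl (fun h j => pder j h) (f i))‖ ≤ 1 := by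
  intro s i ns
  have hJg : ∀ k j, pderiv ℚ_[p] j (g k) ∈ hurwitzSubring (PadicInt.subring p) := fun k j =>
    mem_hurwitzSubring_of_coeff_mem fun d => by simpa [← pder_eq_pderiv] using hJg_int k j d
  have hf := mem_hurwitzSubring_of_msubst_eq_X hg0 hJg0 hJg (hfg i)
  rw [constantCoeff_foldl_pder]
  exact hf _

/-- If `f, g` are `r`-tuples of power series over `ℚ_p` with zero constant
term, `f(g(X)) = X`, `J_g` has entries in `ℤ_p[[X]]` and `J_g(0) = 1`, then all iterated
partial derivatives of the components of `f` at `0` lie in `ℤ_p`. -/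
theorem iterated_pderiv_at_zero_int_of_left_inverse
    {p : ℕ} [Fact p.Prime] {r : ℕ} (hr : 1 ≤ r)
    (f g : Fin r → MvPowerSeries (Fin r) ℚ_[p])
    (hf0 : ∀ i, MvPowerSeries.constantCoeff (f i) = 0)
    (hg0 : ∀ i, MvPowerSeries.constantCoeff (g i) = 0)
    (hfg : ∀ i, msubst g (f i) = MvPowerSeries.X i)
    (hJg_int : ∀ (i j : Fin r) (d : Fin r →₀ ℕ),
      ‖MvPowerSeries.coeff d (pder j (g i))‖ ≤ 1)
    (hJg0 : ∀ i j, MvPowerSeries.coeff (Finsupp.single j 1) (g i)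
      = if i = j then 1 else 0) :
    ∀ (s : ℕ) (i : Fin r) (ns : Fin s → Fin r),
      ‖MvPowerSeries.constantCoeff
        ((List.ofFn ns).foldl (fun h j => pder j h) (f i))‖ ≤ 1 :=
  iterated_pderiv_at_zero_int_of_left_inverse_general f g hg0 hfg hJg_int hJg0
end

section
/- Let R be a commutative ring, n ≥ 1 and r ≥ 1 integers, and A, B_1, …, B_n ∈ M_r(R). Let M ∈ M_{nr}(R) be the n×n block matrix with r×r blocks whose (i,i) block is the identity for 1 ≤ i ≤ n−1, whose (n,n) block is 1 + B_n, whose (i+1,i) block is A for 1 ≤ i ≤ n−1, whose (i,n) block is B_i for 1 ≤ i ≤ n−1, and all of whose other blocks are zero. Then det(M) = det( 1 + Σ_{i=0}^{n−1} (−A)^i B_{n−i} ), where 1 denotes the r×r identity matrix and the right-hand determinant is taken in M_r(R). -/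
open Matrix Finset

/-- Determinant of the block matrix with identity blocks on the diagonal
(the last one being `1 + Bₙ`), `A` on the subdiagonal and `B₁, …, Bₙ` in the last block
column: `det M = det (1 + ∑_{i=0}^{n−1} (−A)^i B_{n−i})`. -/
theorem det_block_companion_like {R : Type*} [CommRing R] {n r : ℕ}
    (hn : 1 ≤ n) (hr : 1 ≤ r)
    (A : Matrix (Fin r) (Fin r) R) (B : Fin n → Matrix (Fin r) (Fin r) R)
    (M : Matrix (Fin n × Fin r) (Fin n × Fin r) R)
    (hM : ∀ (i j : Fin n) (a b : Fin r),
      M (i, a) (j, b) = (if i = j ∧ a = b then 1 else 0)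
        + (if (i : ℕ) = (j : ℕ) + 1 then A a b else 0)
        + (if (j : ℕ) = n - 1 then B i a b else 0)) :
    M.det = ((1 : Matrix (Fin r) (Fin r) R)
      + ∑ i : Fin n, (-A) ^ (i : ℕ) * B (Fin.rev i)).det := by
  obtain ⟨m, rfl⟩ : ∃ m, n = m + 1 := ⟨n - 1, (Nat.succ_pred_eq_of_pos hn).symm⟩
  have : NeZero r := ⟨by omega⟩
  -- the partial sums cᵢ = ∑_{k≤i} (-A)^{i-k} B_k
  set c : Fin (m + 1) → Matrix (Fin r) (Fin r) R :=
    fun i => ∑ j : Fin (m + 1),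
      if (j : ℕ) ≤ (i : ℕ) then (-A) ^ ((i : ℕ) - (j : ℕ)) * B j else 0 with hc
  have hc0 : c 0 = B 0 := by
    simp only [hc]
    rw [Finset.sum_eq_single (0 : Fin (m + 1))]
    · simp
    · intro j _ hj
      have : ¬ ((j : ℕ) ≤ ((0 : Fin (m+1)) : ℕ)) := by
        simp only [Fin.val_zero, Nat.le_zero]
        exact fun h => hj (Fin.ext_iff.mpr (by simp [h]))
      rw [if_neg this]
    · simp
  have hrec : ∀ i j : Fin (m + 1), (i : ℕ) = (j : ℕ) + 1 → c i = B i - A * c j := by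
    intro i j hij
    have key : ∀ k : Fin (m + 1),
        (if (k : ℕ) ≤ (i : ℕ) then (-A) ^ ((i : ℕ) - (k : ℕ)) * B k else 0)
        = (if k = i then B i else 0)
          - A * (if (k : ℕ) ≤ (j : ℕ) then (-A) ^ ((j : ℕ) - (k : ℕ)) * B k else 0) := by
      intro k
      rcases eq_or_ne k i with rfl | hk
      · have h1 : (k : ℕ) ≤ (k : ℕ) := le_rfl
        have h2 : ¬ ((k : ℕ) ≤ (j : ℕ)) := by omega
        simp [h1, h2]
      · rcases le_or_gt (k : ℕ) (j : ℕ) with h2 | h2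
        · have h1 : (k : ℕ) ≤ (i : ℕ) := by omega
          have h3 : (i : ℕ) - (k : ℕ) = ((j : ℕ) - (k : ℕ)) + 1 := by omega
          simp only [h1, if_true, h2, if_neg hk, zero_sub, h3]
          rw [pow_succ' (-A) ((j : ℕ) - (k : ℕ))]
          rw [Matrix.mul_assoc, neg_mul]
        · have h1 : ¬ ((k : ℕ) ≤ (i : ℕ)) := by omega
          have h2' : ¬ ((k : ℕ) ≤ (j : ℕ)) := by omega
          simp [h1, h2', hk]
    calc c i = ∑ k : Fin (m+1), ((if k = i then B i else 0)
          - A * (if (k : ℕ) ≤ (j : ℕ) then (-A) ^ ((j : ℕ) - (k : ℕ)) * B k else 0)) := by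
            rw [hc]; exact Finset.sum_congr rfl fun k _ => key k
      _ = B i - A * c j := by
            rw [Finset.sum_sub_distrib, Finset.sum_ite_eq' Finset.univ i fun _ => B i,
              ← Finset.mul_sum]
            simp [hc]
  -- the two factors
  set L : Matrix (Fin (m+1) × Fin r) (Fin (m+1) × Fin r) R :=
    fun p q => (if p.1 = q.1 ∧ p.2 = q.2 then 1 else 0)
      + (if (p.1 : ℕ) = (q.1 : ℕ) + 1 then A p.2 q.2 else 0) with hL
  set U : Matrix (Fin (m+1) × Fin r) (Fin (m+1) × Fin r) R :=
    fun p q => (if p.1 = q.1 ∧ p.2 = q.2 then 1 else 0)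
      + (if (q.1 : ℕ) = m then c p.1 p.2 q.2 else 0) with hU
  -- M = L * U
  have hLU : M = L * U := by
    ext ⟨i, a⟩ ⟨j, b⟩
    rw [hM, Matrix.mul_apply, Fintype.sum_prod_type]
    simp only [hL, hU, add_mul, mul_add, Finset.sum_add_distrib]
    have e1 : (∑ k : Fin (m+1), ∑ t : Fin r,
        (if i = k ∧ a = t then (1:R) else 0) * (if k = j ∧ t = b then 1 else 0))
        = (if i = j ∧ a = b then 1 else 0) := by
      simp [Finset.sum_ite_eq, Finset.sum_ite_eq', ite_and, Finset.sum_ite_eq']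
    have e2 : (∑ k : Fin (m+1), ∑ t : Fin r,
        (if i = k ∧ a = t then (1:R) else 0) * (if (j : ℕ) = m then c k t b else 0))
        = (if (j : ℕ) = m then c i a b else 0) := by
      by_cases hj : (j : ℕ) = m
      · simp [hj, ite_and, Finset.sum_ite_eq', Finset.sum_ite_eq]
      · simp [hj]
    have e3 : (∑ k : Fin (m+1), ∑ t : Fin r,
        (if (i : ℕ) = (k : ℕ) + 1 then A a t else 0) * (if k = j ∧ t = b then (1:R) else 0))
        = (if (i : ℕ) = (j : ℕ) + 1 then A a b else 0) := by
      have : ∀ k : Fin (m+1), (∑ t : Fin r,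
          (if (i : ℕ) = (k : ℕ) + 1 then A a t else 0) * (if k = j ∧ t = b then (1:R) else 0))
          = if k = j then (if (i : ℕ) = (k : ℕ) + 1 then A a b else 0) else 0 := by
        intro k
        by_cases hik : (i : ℕ) = (k : ℕ) + 1
        · by_cases hk : k = j <;>
            simp [hik, hk, ite_and, Finset.sum_ite_eq', mul_ite, mul_one, mul_zero]
        · simp [hik]
      rw [Finset.sum_congr rfl fun k _ => this k, Finset.sum_ite_eq' Finset.univ j]
      simp
    have e4 : (∑ k : Fin (m+1), ∑ t : Fin r,
        (if (i : ℕ) = (k : ℕ) + 1 then A a t else 0) * (if (j : ℕ) = m then c k t b else 0))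
        = (if (j : ℕ) = m then (B i a b - c i a b) else 0) := by
      by_cases hj : (j : ℕ) = m
      · simp only [if_pos hj]
        rcases eq_or_ne i 0 with rfl | hi
        · have : ∀ k : Fin (m+1), ¬ (((0 : Fin (m+1)) : ℕ) = (k : ℕ) + 1) := by
            intro k; simp
          simp only [this, if_false, zero_mul, Finset.sum_const_zero]
          rw [hc0]; ring
        · obtain ⟨i', hi'⟩ : ∃ i' : Fin (m+1), (i : ℕ) = (i' : ℕ) + 1 := by
            have h1 : 1 ≤ (i : ℕ) := Nat.one_le_iff_ne_zero.mpr fun h => hi (Fin.ext h)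
            exact ⟨⟨(i : ℕ) - 1, by omega⟩, by simp; omega⟩
          rw [Finset.sum_eq_single i']
          · simp only [if_pos hi']
            rw [← Matrix.mul_apply]
            have hB : B i = c i + A * c i' := by rw [hrec i i' hi']; abel
            rw [hB]
            simp [Matrix.add_apply]
          · intro k _ hk
            have : ¬ ((i : ℕ) = (k : ℕ) + 1) := by
              intro h
              exact hk (Fin.ext (by omega))
            simp [this]
          · simp
      · simp [hj]
    rw [e1, e2, e3, e4]
    by_cases hj : (j : ℕ) = m <;> simp [hj] <;> ring
  -- det L = 1
  have hLdet : L.det = 1 := by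
    have hbt : L.BlockTriangular (fun p => OrderDual.toDual p.1) := by
      intro p q hpq
      have h : p.1 < q.1 := hpq
      have h1 : p.1 ≠ q.1 := ne_of_lt h
      have h2 : ¬ ((p.1 : ℕ) = (q.1 : ℕ) + 1) := by
        have := Fin.lt_iff_val_lt_val.mp h; omega
      simp [hL, h1, h2]
    rw [hbt.det]
    have himg : (Finset.univ.image fun p : Fin (m+1) × Fin r => OrderDual.toDual p.1)
        = Finset.univ := by
      apply Finset.image_univ_of_surjective
      intro a
      exact ⟨(OrderDual.ofDual a, ⟨0, by omega⟩), rfl⟩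
    rw [himg]
    apply Finset.prod_eq_one
    intro a _
    have hblock : L.toSquareBlock (fun p => OrderDual.toDual p.1) a = 1 := by
      ext ⟨⟨p1, p2⟩, hp⟩ ⟨⟨q1, q2⟩, hq⟩
      have hpq1 : p1 = q1 := by
        have : OrderDual.toDual p1 = OrderDual.toDual q1 := hp.trans hq.symm
        exact this
      subst hpq1
      have h2 : ¬ ((p1 : ℕ) = (p1 : ℕ) + 1) := by omega
      simp only [Matrix.toSquareBlock_def, Matrix.of_apply]
      simp only [Matrix.toSquareBlock_def, Matrix.of_apply, hL, if_neg h2, add_zero,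
        Matrix.one_apply, Subtype.mk.injEq, Prod.mk.injEq, true_and]
    rw [hblock, Matrix.det_one]
  -- det U = det (1 + c (last m))
  have hUdet : U.det = ((1 : Matrix (Fin r) (Fin r) R) + c (Fin.last m)).det := by
    have hbt : U.BlockTriangular (fun p => p.1) := by
      intro p q hpq
      have hlt : (q.1 : ℕ) < (p.1 : ℕ) := hpq
      have h1 : p.1 ≠ q.1 := fun h => by rw [h] at hlt; omega
      have hpm : (p.1 : ℕ) < m + 1 := p.1.isLt
      have h2 : ¬ ((q.1 : ℕ) = m) := by omega
      simp [hU, h1, h2]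
    rw [hbt.det]
    have himg : (Finset.univ.image fun p : Fin (m+1) × Fin r => p.1) = Finset.univ := by
      apply Finset.image_univ_of_surjective
      intro a
      exact ⟨(a, ⟨0, by omega⟩), rfl⟩
    rw [himg]
    rw [Finset.prod_eq_single (Fin.last m)]
    · -- the last block
      set e : Fin r ≃ {p : Fin (m+1) × Fin r // p.1 = Fin.last m} :=
        ⟨fun a => ⟨(Fin.last m, a), rfl⟩, fun p => p.1.2,
          fun a => rfl, fun ⟨⟨p1, p2⟩, hp⟩ => Subtype.ext (Prod.ext hp.symm rfl)⟩ with he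
      have : U.toSquareBlock (fun p => p.1) (Fin.last m)
          = ((1 : Matrix (Fin r) (Fin r) R) + c (Fin.last m)).submatrix e.symm e.symm := by
        ext ⟨⟨p1, p2⟩, hp⟩ ⟨⟨q1, q2⟩, hq⟩
        have hp1 : p1 = Fin.last m := hp
        have hq1 : q1 = Fin.last m := hq
        have hqm : (q1 : ℕ) = m := by rw [hq1]; simp
        simp only [Matrix.toSquareBlock_def, Matrix.of_apply]
        simp only [Matrix.toSquareBlock_def, Matrix.of_apply, hU, if_pos hqm,
          Matrix.submatrix_apply, Matrix.add_apply, Matrix.one_apply, he,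
          Equiv.coe_fn_symm_mk, hp1, hq1, Subtype.mk.injEq, Prod.mk.injEq, true_and]
        simp
      rw [this, Matrix.det_submatrix_equiv_self]
    · intro a _ ha
      have ham : (a : ℕ) ≠ m := fun h => ha (Fin.ext (by simp [h]))
      have hblock : U.toSquareBlock (fun p => p.1) a = 1 := by
        ext ⟨⟨p1, p2⟩, hp⟩ ⟨⟨q1, q2⟩, hq⟩
        have hp1 : p1 = a := hp
        have hq1 : q1 = a := hq
        have h2 : ¬ ((q1 : ℕ) = m) := by rw [hq1]; exact ham
        simp only [Matrix.toSquareBlock_def, Matrix.of_apply]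
        simp only [Matrix.toSquareBlock_def, Matrix.of_apply, hU, if_neg h2, add_zero,
          Matrix.one_apply, Subtype.mk.injEq, Prod.mk.injEq, hp1, hq1, true_and]
        rw [if_neg ham, add_zero]
      rw [hblock, Matrix.det_one]
    · simp
  -- identify the sum
  have hsum : (∑ i : Fin (m+1), (-A) ^ (i : ℕ) * B (Fin.rev i)) = c (Fin.last m) := by
    rw [← Equiv.sum_comp (Fin.revPerm) (fun i : Fin (m+1) => (-A) ^ (i : ℕ) * B (Fin.rev i))]
    rw [hc]
    apply Finset.sum_congr rfl
    intro j _
    have hle : (j : ℕ) ≤ ((Fin.last m : Fin (m+1)) : ℕ) := by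
      simp [Fin.le_last, Fin.is_le]
    rw [if_pos hle]
    simp only [Fin.revPerm_apply, Fin.rev_rev, Fin.val_rev, Fin.val_last]
    congr 2
    omega
  rw [hLU, Matrix.det_mul, hLdet, hUdet, one_mul, hsum]
end

section
/- Let p be a prime, r ≥ 1 and k ≥ 1 integers, and let Γ be a finite cyclic group with generator γ. Let u ∈ GL_r(Z_p). Regard u^{−k} as an element of M_r(Z_p[Γ]) and let γ·u^{−k} ∈ M_r(Z_p[Γ]) have (i,j) entry γ·(u^{−k})_{ij}. Then the determinant det( p^k·1 − γ·u^{−k} ), computed in the commutative ring Z_p[Γ], is a unit of Z_p[Γ]. -/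
/-!
Since `ℤ_[p][Γ]` is finite over the local ring `ℤ_[p]`, every maximal ideal of it contracts to
`(p)`, so `p` lies in its Jacobson radical. Modulo the radical the matrix becomes `-γ • u⁻ᵏ`,
whose determinant is a unit, and units lift along the quotient by the Jacobson radical.
-/

theorem Ideal.jacobson_bot_le_comap_of_isIntegral {R A : Type*} [CommRing R] [CommRing A]
    [Algebra R A] [Algebra.IsIntegral R A] :
    (⊥ : Ideal R).jacobson ≤ (⊥ : Ideal A).jacobson.comap (algebraMap R A) := by
  intro x hx
  rw [Ideal.mem_comap, Ideal.jacobson, Ideal.mem_sInf]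
  rintro J ⟨-, hJ⟩
  exact Ideal.mem_sInf.1 hx ⟨bot_le, Ideal.isMaximal_comap_of_isIntegral_of_isMaximal J⟩

theorem Matrix.isUnit_det_smul_one_sub_of_mem_jacobson_bot {R n : Type*} [CommRing R]
    [Fintype n] [DecidableEq n] {x : R} (hx : x ∈ (⊥ : Ideal R).jacobson) {W : Matrix n n R}
    (hW : IsUnit W.det) : IsUnit (x • 1 - W).det := by
  set f := Ideal.Quotient.mk (⊥ : Ideal R).jacobson
  have : IsLocalHom f := isLocalHom_of_le_jacobson_bot _ le_rfl
  refine isUnit_of_map_unit f _ ?_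
  have hfx : f x = 0 := Ideal.Quotient.eq_zero_iff_mem.2 hx
  have hmap : f.mapMatrix (x • 1 - W) = -f.mapMatrix W := by
    ext i j
    simp [Matrix.one_apply, apply_ite f, hfx]
  rw [RingHom.map_det, hmap, det_neg, ← RingHom.map_det]
  exact (isUnit_one.neg.pow _).mul (hW.map f)

theorem MonoidAlgebra.isUnit_det_map_single {k G n : Type*} [CommRing k] [CommGroup G]
    [Fintype n] [DecidableEq n] (g : G) {M : Matrix n n k} (hM : IsUnit M.det) :
    IsUnit (M.map (single g)).det := by
  have hsingle :
      M.map (single g) = of k G g • (algebraMap k (MonoidAlgebra k G)).mapMatrix M := by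
    ext i j
    rw [Matrix.smul_apply, RingHom.mapMatrix_apply, Matrix.map_apply, Matrix.map_apply,
      single_eq_algebraMap_mul_of, smul_eq_mul, mul_comm]
  rw [hsingle, Matrix.det_smul, ← RingHom.map_det]
  exact (((Group.isUnit g).map (of k G)).pow _).mul (hM.map _)

theorem det_pPow_sub_gamma_uInvPow_isUnit_general
    {p : ℕ} [Fact p.Prime] {r k : ℕ} (hk : 1 ≤ k)
    {Γ : Type*} [CommGroup Γ] [Finite Γ] (γ : Γ)
    (u : Matrix.GeneralLinearGroup (Fin r) ℤ_[p])
    (W : Matrix (Fin r) (Fin r) (MonoidAlgebra ℤ_[p] Γ))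
    (hW : ∀ i j, W i j
      = MonoidAlgebra.single γ
          (((u⁻¹ ^ k : Matrix.GeneralLinearGroup (Fin r) ℤ_[p]) : Matrix (Fin r) (Fin r) ℤ_[p]) i j)) :
    IsUnit ((((p : MonoidAlgebra ℤ_[p] Γ)) ^ k • (1 : Matrix (Fin r) (Fin r) (MonoidAlgebra ℤ_[p] Γ)) - W).det) := by
  have hp : (p : MonoidAlgebra ℤ_[p] Γ) ∈ (⊥ : Ideal (MonoidAlgebra ℤ_[p] Γ)).jacobson := by
    simpa using Ideal.jacobson_bot_le_comap_of_isIntegral (A := MonoidAlgebra ℤ_[p] Γ)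
      (IsLocalRing.maximalIdeal_le_jacobson ⊥ PadicInt.p_nonunit)
  have hu : IsUnit ((u⁻¹ ^ k : Matrix.GeneralLinearGroup (Fin r) ℤ_[p]) :
      Matrix (Fin r) (Fin r) ℤ_[p]).det :=
    (Matrix.isUnit_iff_isUnit_det _).1 (Units.isUnit _)
  rw [show W = _ from Matrix.ext hW]
  exact Matrix.isUnit_det_smul_one_sub_of_mem_jacobson_bot (Ideal.pow_mem_of_mem _ hp k hk)
    (MonoidAlgebra.isUnit_det_map_single γ hu)

/-- For a finite cyclic group `Γ` with generator `γ`, `u ∈ GL_r(ℤ_p)` and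
`k ≥ 1`, the determinant `det(p^k·1 − γ·u^{−k})`, computed in the commutative ring `ℤ_p[Γ]`,
is a unit of `ℤ_p[Γ]`. -/
theorem det_pPow_sub_gamma_uInvPow_isUnit
    {p : ℕ} [Fact p.Prime] {r k : ℕ} (hr : 1 ≤ r) (hk : 1 ≤ k)
    {Γ : Type*} [CommGroup Γ] [Finite Γ] (γ : Γ) (hgen : Subgroup.zpowers γ = ⊤)
    (u : Matrix.GeneralLinearGroup (Fin r) ℤ_[p])
    (W : Matrix (Fin r) (Fin r) (MonoidAlgebra ℤ_[p] Γ))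
    (hW : ∀ i j, W i j
      = MonoidAlgebra.single γ
          (((u⁻¹ ^ k : Matrix.GeneralLinearGroup (Fin r) ℤ_[p]) : Matrix (Fin r) (Fin r) ℤ_[p]) i j)) :
    IsUnit ((((p : MonoidAlgebra ℤ_[p] Γ)) ^ k • (1 : Matrix (Fin r) (Fin r) (MonoidAlgebra ℤ_[p] Γ)) - W).det) :=
  det_pPow_sub_gamma_uInvPow_isUnit_general hk γ u W hW
end

section
/- Let F be a field, k ≥ 1 an integer and β ∈ F, and suppose the polynomial X^k − β splits in F[X] as X^k − β = ∏_{j=1}^k (X − η_j) with η_1,…,η_k ∈ F. Then for every r ≥ 1 and every matrix A ∈ M_r(F) one has ∏_{j=1}^k det(1 − η_j·A) = det(1 − β·A^k), where 1 denotes the r×r identity matrix. -/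
/-!
Reflecting `X^k - β = ∏ (X - η_j)` in degree `k` (i.e. substituting `X ↦ 1/X` and clearing
denominators) gives `1 - β X^k = ∏ (1 - η_j X)` in `F[X]`. Evaluating at `A` and taking
determinants, which is multiplicative, yields the claim.
-/

open Polynomial

namespace Polynomial

theorem reflect_prod {R ι : Type*} [CommSemiring R] (s : Finset ι) (p : ι → R[X]) (d : ι → ℕ)
    (hp : ∀ j ∈ s, (p j).natDegree ≤ d j) :
    reflect (∑ j ∈ s, d j) (∏ j ∈ s, p j) = ∏ j ∈ s, reflect (d j) (p j) := by
  induction s using Finset.cons_induction with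
  | empty => simp [reflect_one]
  | cons a s _ ih =>
    have hs : ∀ j ∈ s, (p j).natDegree ≤ d j := fun j hj => hp j (Finset.mem_cons_of_mem hj)
    have hdeg : (∏ j ∈ s, p j).natDegree ≤ ∑ j ∈ s, d j :=
      (natDegree_prod_le _ _).trans (Finset.sum_le_sum hs)
    rw [Finset.prod_cons, Finset.prod_cons, Finset.sum_cons,
      reflect_mul _ _ (hp a (Finset.mem_cons_self a s)) hdeg, ih hs]

theorem reflect_one_X_sub_C {R : Type*} [Ring R] (a : R) :
    reflect 1 (X - C a) = 1 - C a * X := by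
  rw [reflect_sub, reflect_one_X, reflect_C, pow_one]

theorem one_sub_C_mul_X_pow_eq_prod {R : Type*} [CommRing R] {k : ℕ} (β : R) (η : Fin k → R)
    (h : (X : R[X]) ^ k - C β = ∏ j, (X - C (η j))) :
    1 - C β * X ^ k = ∏ j, (1 - C (η j) * X) := by
  have h' := congrArg (reflect (∑ _j : Fin k, 1)) h
  rw [reflect_prod _ _ _ fun j _ => natDegree_X_sub_C_le (η j)] at h'
  simpa [reflect_sub, reflect_monomial, reflect_C, reflect_one_X_sub_C] using h'

theorem aeval_one_sub_C_mul {R A : Type*} [CommRing R] [Ring A] [Algebra R A] (a : A) (c : R)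
    (p : R[X]) : aeval a (1 - C c * p) = 1 - c • aeval a p := by
  rw [map_sub, map_one, map_mul, aeval_C, ← Algebra.smul_def]

end Polynomial

theorem Matrix.det_aeval_prod {R n ι : Type*} [CommRing R] [Fintype n] [DecidableEq n]
    (A : Matrix n n R) (s : Finset ι) (p : ι → R[X]) :
    (aeval A (∏ j ∈ s, p j)).det = ∏ j ∈ s, (aeval A (p j)).det :=
  map_prod (Matrix.detMonoidHom.comp (aeval A).toMonoidHom) p s

theorem prod_det_one_sub_root_smul_general {F : Type*} [Field F] {k : ℕ}
    (β : F) (η : Fin k → F)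
    (hsplit : (X : F[X]) ^ k - C β = ∏ j : Fin k, ((X : F[X]) - C (η j)))
    {r : ℕ} (A : Matrix (Fin r) (Fin r) F) :
    ∏ j : Fin k, ((1 : Matrix (Fin r) (Fin r) F) - η j • A).det
      = ((1 : Matrix (Fin r) (Fin r) F) - β • A ^ k).det := calc
  _ = ∏ j, (aeval A (1 - C (η j) * X)).det := by simp only [aeval_one_sub_C_mul, aeval_X]
  _ = (aeval A (∏ j, (1 - C (η j) * X))).det := (Matrix.det_aeval_prod A _ _).symm
  _ = (aeval A (1 - C β * X ^ k)).det := by rw [one_sub_C_mul_X_pow_eq_prod β η hsplit]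
  _ = _ := by rw [aeval_one_sub_C_mul, map_pow, aeval_X]

/-- If `X^k − β` splits over a field `F` as `∏ (X − η_j)`, then for every
matrix `A ∈ M_r(F)` one has `∏_j det(1 − η_j • A) = det(1 − β • A^k)`. -/
theorem prod_det_one_sub_root_smul {F : Type*} [Field F] {k : ℕ} (hk : 1 ≤ k)
    (β : F) (η : Fin k → F)
    (hsplit : (X : F[X]) ^ k - C β = ∏ j : Fin k, ((X : F[X]) - C (η j)))
    {r : ℕ} (hr : 1 ≤ r) (A : Matrix (Fin r) (Fin r) F) :
    ∏ j : Fin k, ((1 : Matrix (Fin r) (Fin r) F) - η j • A).det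
      = ((1 : Matrix (Fin r) (Fin r) F) - β • A ^ k).det :=
  prod_det_one_sub_root_smul_general β η hsplit A
end

section
/- Let p be a prime, r ≥ 1, and let Γ be a finite cyclic group of order d with generator γ. Let V ∈ GL_r(Z_p) with det(V^d − 1) ≠ 0, and let M := Z_p^r/(V^d − 1)Z_p^r, regarded as a Z_p[Γ]-module via γ·(m + (V^d−1)Z_p^r) := V^{−1}m + (V^d−1)Z_p^r (well-defined since V^d acts trivially on M). Let μ : Z_p[Γ]^r → Z_p[Γ]^r be the Z_p[Γ]-linear map given by multiplication by the matrix γV − 1 ∈ M_r(Z_p[Γ]) (where γV has (i,j) entry γ·V_{ij}), and let π : Z_p[Γ]^r → M be the Z_p[Γ]-linear map sending α·γ^i (for α ∈ Z_p^r ⊆ Z_p[Γ]^r and i ∈ Z) to V^{−i}α + (V^d−1)Z_p^r. Then the sequence 0 → Z_p[Γ]^r → Z_p[Γ]^r → M → 0, with maps μ and π, is exact: μ is injective, π is surjective, and ker(π) = im(μ). -/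
private theorem exact_sequence_group_ring_twist.aux
    {p : ℕ} [Fact p.Prime] {r d : ℕ}
    {Γ : Type*} [Group Γ] [Finite Γ]
    (γ : Γ) (hγd : γ ^ d = 1) (hpow : ∀ σ : Γ, ∃ k : ℕ, γ ^ k = σ)
    (A B : Matrix (Fin r) (Fin r) ℤ_[p])
    (hAB : A * B = 1) (hBA : B * A = 1)
    (hdet : (A ^ d - 1).det ≠ 0)
    (W : Matrix (Fin r) (Fin r) (MonoidAlgebra ℤ_[p] Γ))
    (hW : ∀ i j, W i j = MonoidAlgebra.single γ (A i j))
    (μ : (Fin r → MonoidAlgebra ℤ_[p] Γ) →ₗ[ℤ_[p]] (Fin r → MonoidAlgebra ℤ_[p] Γ))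
    (hμ : ∀ y, μ y = (W - 1).mulVec y)
    (π : (Fin r → MonoidAlgebra ℤ_[p] Γ) →ₗ[ℤ_[p]]
      ((Fin r → ℤ_[p]) ⧸ LinearMap.range (A ^ d - 1).mulVecLin))
    (key2 : ∀ (k : ℕ) (α : Fin r → ℤ_[p]),
      π (fun j => MonoidAlgebra.single (γ ^ k) (α j)) =
        Submodule.Quotient.mk ((B ^ k).mulVec α)) :
    Function.Injective μ ∧ Function.Surjective π ∧
      ∀ y, π y = 0 ↔ y ∈ Set.range μ := by
  classical
  have : Fintype Γ := Fintype.ofFinite Γ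
  have hcomm : Commute A B := hAB.trans hBA.symm
  have hABk : ∀ k : ℕ, A ^ k * B ^ k = 1 := fun k => by
    rw [← hcomm.mul_pow, hAB, one_pow]
  have hBAk : ∀ k : ℕ, B ^ k * A ^ k = 1 := fun k => by
    rw [← hcomm.symm.mul_pow, hBA, one_pow]
  have hsingle_sum : ∀ (a : Γ) (s : Finset (Fin r)) (f : Fin r → ℤ_[p]),
      MonoidAlgebra.single a (∑ l ∈ s, f l) = ∑ l ∈ s, MonoidAlgebra.single a (f l) :=
    fun a s f => map_sum (MonoidAlgebra.singleAddHom a) f s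
  have hsingle_sumG : ∀ (a : Γ) (s : Finset Γ) (f : Γ → ℤ_[p]),
      MonoidAlgebra.single a (∑ l ∈ s, f l) = ∑ l ∈ s, MonoidAlgebra.single a (f l) :=
    fun a s f => map_sum (MonoidAlgebra.singleAddHom a) f s
  -- powers of W
  have hWpow : ∀ (k : ℕ) (i j : Fin r),
      (W ^ k) i j = MonoidAlgebra.single (γ ^ k) ((A ^ k) i j) := by
    intro k
    induction k with
    | zero =>
      intro i j
      by_cases h : i = j <;>
        simp [pow_zero, Matrix.one_apply, h, MonoidAlgebra.one_def]
    | succ k ih =>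
      intro i j
      rw [pow_succ' W k, Matrix.mul_apply]
      simp only [hW, ih, MonoidAlgebra.single_mul_single]
      rw [pow_succ' A k, pow_succ' γ k, Matrix.mul_apply, hsingle_sum]
  -- multiplication of W^k with a "single" vector
  have hsvmul : ∀ (k : ℕ) (σ : Γ) (α : Fin r → ℤ_[p]),
      (W ^ k).mulVec (fun j => MonoidAlgebra.single σ (α j)) =
        fun i => MonoidAlgebra.single (γ ^ k * σ) (((A ^ k).mulVec α) i) := by
    intro k σ α
    funext i
    simp only [Matrix.mulVec, dotProduct, hWpow, MonoidAlgebra.single_mul_single]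
    rw [← hsingle_sum]
  -- decomposition of a vector over the group algebra
  have decomp : ∀ y : Fin r → MonoidAlgebra ℤ_[p] Γ,
      y = ∑ σ : Γ, fun j => MonoidAlgebra.single σ ((y j).coeff σ) := by
    intro y
    funext j
    rw [Finset.sum_apply]
    refine MonoidAlgebra.ext (Finsupp.ext fun τ => ?_)
    rw [MonoidAlgebra.coeff_sum, Finsupp.finset_sum_apply]
    simp [MonoidAlgebra.coeff_single_apply, Finsupp.single_apply]
  -- key1 : single-vectors are congruent mod range μ to vectors over γ^0
  have key1 : ∀ (k : ℕ) (α : Fin r → ℤ_[p]),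
      ∃ x, μ x = (fun j => MonoidAlgebra.single (γ ^ k) (α j)) -
        (fun j => MonoidAlgebra.single (1 : Γ) (((B ^ k).mulVec α) j)) := by
    intro k α
    refine ⟨(∑ i ∈ Finset.range k, W ^ i).mulVec
      (fun j => MonoidAlgebra.single (1 : Γ) (((B ^ k).mulVec α) j)), ?_⟩
    rw [hμ, Matrix.mulVec_mulVec, mul_geom_sum, Matrix.sub_mulVec, Matrix.one_mulVec,
      hsvmul k 1 ((B ^ k).mulVec α), Matrix.mulVec_mulVec, hABk k, Matrix.one_mulVec,
      mul_one]
  -- range μ ⊆ ker π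
  have hker : ∀ x, π (μ x) = 0 := by
    intro x
    have hx : μ x = ∑ σ : Γ, μ (fun j => MonoidAlgebra.single σ ((x j).coeff σ)) := by
      conv_lhs => rw [decomp x]
      exact map_sum μ _ _
    rw [hx, map_sum]
    refine Finset.sum_eq_zero fun σ _ => ?_
    obtain ⟨k, rfl⟩ := hpow σ
    rw [hμ, Matrix.sub_mulVec, Matrix.one_mulVec]
    have h1 : W.mulVec (fun j => MonoidAlgebra.single (γ ^ k) ((x j).coeff (γ ^ k))) =
        fun i => MonoidAlgebra.single (γ ^ (k + 1))
          ((A.mulVec (fun j => (x j).coeff (γ ^ k))) i) := by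
      have h0 := hsvmul 1 (γ ^ k) (fun j => (x j).coeff (γ ^ k))
      rw [pow_one, pow_one, pow_one] at h0
      rw [h0, ← pow_succ']
    rw [map_sub, h1, key2 (k + 1) (A.mulVec fun j => (x j).coeff (γ ^ k)),
      key2 k fun j => (x j).coeff (γ ^ k), Matrix.mulVec_mulVec]
    have h2 : B ^ (k + 1) * A = B ^ k := by
      rw [pow_succ, mul_assoc, hBA, mul_one]
    rw [h2, sub_self]
  -- injectivity of μ
  have hinj : Function.Injective μ := by
    refine (injective_iff_map_eq_zero μ).mpr fun y hy => ?_
    rw [hμ] at hy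
    have hWy : W.mulVec y = y := by
      rw [Matrix.sub_mulVec, Matrix.one_mulVec, sub_eq_zero] at hy
      exact hy
    set c : Γ → Fin r → ℤ_[p] := fun σ j => (y j).coeff σ with hc
    have hrec : ∀ σ : Γ, c σ = A.mulVec (c (γ⁻¹ * σ)) := by
      intro σ
      funext i
      have h1 : ((W.mulVec y) i).coeff σ = (y i).coeff σ := by rw [hWy]
      calc c σ i = (y i).coeff σ := rfl
        _ = ((W.mulVec y) i).coeff σ := h1.symm
        _ = ∑ j, (MonoidAlgebra.single γ (A i j) * y j).coeff σ := by
            simp only [Matrix.mulVec, dotProduct, hW]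
            rw [MonoidAlgebra.coeff_sum, Finsupp.finset_sum_apply]
        _ = ∑ j, A i j * (y j).coeff (γ⁻¹ * σ) := by
            simp [MonoidAlgebra.coeff_single_mul_apply]
        _ = A.mulVec (c (γ⁻¹ * σ)) i := by
            simp [Matrix.mulVec, dotProduct, hc]
    have hiter : ∀ (n : ℕ) (σ : Γ), c σ = (A ^ n).mulVec (c (γ⁻¹ ^ n * σ)) := by
      intro n
      induction n with
      | zero => intro σ; simp [Matrix.one_mulVec]
      | succ n ih =>
        intro σ
        rw [ih σ, hrec (γ⁻¹ ^ n * σ), Matrix.mulVec_mulVec, ← pow_succ, ← mul_assoc,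
          ← pow_succ']
    have hzero : ∀ σ : Γ, c σ = 0 := by
      intro σ
      have h1 := hiter d σ
      rw [inv_pow, hγd, inv_one, one_mul] at h1
      have h2 : (A ^ d - 1).mulVec (c σ) = 0 := by
        rw [Matrix.sub_mulVec, Matrix.one_mulVec, ← h1, sub_self]
      have h3 : ((A ^ d - 1).det) • (c σ) = 0 := by
        have h4 := congrArg (fun w => (A ^ d - 1).adjugate.mulVec w) h2
        simpa [Matrix.mulVec_mulVec, Matrix.adjugate_mul, Matrix.smul_mulVec,
          Matrix.one_mulVec] using h4
      funext i
      have h5 := congrFun h3 i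
      simp only [Pi.smul_apply, smul_eq_mul, Pi.zero_apply] at h5
      rcases mul_eq_zero.mp h5 with h | h
      · exact absurd h hdet
      · exact h
    funext j
    refine MonoidAlgebra.ext (Finsupp.ext fun σ => ?_)
    exact congrFun (hzero σ) j
  -- surjectivity of π
  have hsurj : Function.Surjective π := by
    intro q
    obtain ⟨t, rfl⟩ := Submodule.Quotient.mk_surjective _ q
    refine ⟨fun j => MonoidAlgebra.single (γ ^ 0) (t j), ?_⟩
    rw [key2 0 t, pow_zero, Matrix.one_mulVec]
  refine ⟨hinj, hsurj, fun y => ⟨fun hy => ?_, fun hy => ?_⟩⟩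
  · -- ker π ⊆ range μ
    choose k hk using hpow
    set c : Γ → Fin r → ℤ_[p] := fun σ j => (y j).coeff σ with hc
    set δ : Fin r → ℤ_[p] := ∑ σ : Γ, (B ^ k σ).mulVec (c σ) with hδ
    have hstep : ∃ x, μ x = y - (fun j => MonoidAlgebra.single (1 : Γ) (δ j)) := by
      have hσ : ∀ σ : Γ, ∃ x, μ x = (fun j => MonoidAlgebra.single σ (c σ j)) -
          (fun j => MonoidAlgebra.single (1 : Γ) (((B ^ k σ).mulVec (c σ)) j)) := by
        intro σ
        have h := key1 (k σ) (c σ)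
        rwa [hk σ] at h
      choose xs hxs using hσ
      refine ⟨∑ σ : Γ, xs σ, ?_⟩
      rw [map_sum, Finset.sum_congr rfl (fun σ _ => hxs σ), Finset.sum_sub_distrib]
      congr 1
      · exact (decomp y).symm
      · funext j
        rw [Finset.sum_apply]
        have hδj : δ j = ∑ σ : Γ, ((B ^ k σ).mulVec (c σ)) j := by
          rw [hδ, Finset.sum_apply]
        rw [hδj]
        exact (hsingle_sumG 1 Finset.univ fun σ => ((B ^ k σ).mulVec (c σ)) j).symm
    obtain ⟨x0, hx0⟩ := hstep
    have h2 : π (fun j => MonoidAlgebra.single (1 : Γ) (δ j)) = Submodule.Quotient.mk δ := by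
      have h := key2 0 δ
      rw [pow_zero B, Matrix.one_mulVec] at h
      simpa using h
    have hmkδ : (Submodule.Quotient.mk δ :
        (Fin r → ℤ_[p]) ⧸ LinearMap.range ((A ^ d - 1).mulVecLin)) = 0 := by
      have h1 := congrArg π hx0
      rw [hker x0, map_sub, hy, h2, zero_sub] at h1
      exact neg_eq_zero.mp h1.symm
    have hδmem : δ ∈ LinearMap.range (A ^ d - 1).mulVecLin :=
      (Submodule.Quotient.mk_eq_zero _).mp hmkδ
    obtain ⟨t, ht⟩ := hδmem
    have hδt : δ = (A ^ d).mulVec t - t := by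
      rw [← ht, Matrix.mulVecLin_apply, Matrix.sub_mulVec, Matrix.one_mulVec]
    obtain ⟨x1, hx1⟩ := key1 d ((A ^ d).mulVec t)
    have hx1' : μ x1 = fun j => MonoidAlgebra.single (1 : Γ) (δ j) := by
      rw [hx1, hγd, Matrix.mulVec_mulVec, hBAk d, Matrix.one_mulVec]
      funext j
      rw [Pi.sub_apply, hδt, ← MonoidAlgebra.single_sub]
      rfl
    refine ⟨x0 + x1, ?_⟩
    rw [map_add, hx0, hx1']
    exact sub_add_cancel _ _
  · obtain ⟨x, rfl⟩ := hy
    exact hker x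

/-- For `Γ` cyclic of order `d` with generator `γ` and `V ∈ GL_r(ℤ_p)` with
`det(V^d − 1) ≠ 0`, the sequence
`0 → ℤ_p[Γ]^r → ℤ_p[Γ]^r → ℤ_p^r/(V^d − 1)ℤ_p^r → 0`,
with first map multiplication by the matrix `γV − 1` and second map
`α·γ^i ↦ V^{−i}α mod (V^d − 1)`, is exact. -/
theorem exact_sequence_group_ring_twist
    {p : ℕ} [Fact p.Prime] {r d : ℕ} (hr : 1 ≤ r)
    {Γ : Type*} [Group Γ] [Finite Γ] (hcard : Nat.card Γ = d)
    (γ : Γ) (hgen : Subgroup.zpowers γ = ⊤)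
    (v : Matrix.GeneralLinearGroup (Fin r) ℤ_[p])
    (hdet : (((v : Matrix (Fin r) (Fin r) ℤ_[p])) ^ d - 1).det ≠ 0)
    -- the action of `Γ` on `M = ℤ_p^r/(V^d − 1)ℤ_p^r`, in which `γ` acts by `V⁻¹`
    (ρ : Representation ℤ_[p] Γ
      ((Fin r → ℤ_[p]) ⧸ LinearMap.range (((v : Matrix (Fin r) (Fin r) ℤ_[p])) ^ d - 1).mulVecLin))
    (hργ : ∀ t : Fin r → ℤ_[p],
      ρ γ (Submodule.Quotient.mk t)
        = Submodule.Quotient.mk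
            (((v⁻¹ : Matrix.GeneralLinearGroup (Fin r) ℤ_[p])
              : Matrix (Fin r) (Fin r) ℤ_[p]).mulVec t))
    -- the matrix `γV − 1` over the group ring
    (W : Matrix (Fin r) (Fin r) (MonoidAlgebra ℤ_[p] Γ))
    (hW : ∀ i j, W i j = MonoidAlgebra.single γ ((v : Matrix (Fin r) (Fin r) ℤ_[p]) i j))
    -- the map `μ` : multiplication by `γV − 1`
    (μ : (Fin r → MonoidAlgebra ℤ_[p] Γ) →ₗ[ℤ_[p]] (Fin r → MonoidAlgebra ℤ_[p] Γ))
    (hμ : ∀ y, μ y = (W - 1).mulVec y)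
    -- the map `π`, `ℤ_p[Γ]`-linear for the action `ρ`, with `π(α·γ^i) = V^{−i}α`
    (π : (Fin r → MonoidAlgebra ℤ_[p] Γ) →ₗ[ℤ_[p]]
      ((Fin r → ℤ_[p]) ⧸ LinearMap.range (((v : Matrix (Fin r) (Fin r) ℤ_[p])) ^ d - 1).mulVecLin))
    (hπequiv : ∀ σ : Γ, ∀ y, π (fun j => MonoidAlgebra.single σ 1 * y j) = ρ σ (π y))
    (hπ : ∀ (α : Fin r → ℤ_[p]) (i : ℤ),
      π (fun j => MonoidAlgebra.single (γ ^ i) (α j))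
        = Submodule.Quotient.mk
            (((v ^ (-i) : Matrix.GeneralLinearGroup (Fin r) ℤ_[p])
              : Matrix (Fin r) (Fin r) ℤ_[p]).mulVec α)) :
    Function.Injective μ ∧ Function.Surjective π ∧
      ∀ y, π y = 0 ↔ y ∈ Set.range μ := by
  have hγd : γ ^ d = 1 := by rw [← hcard]; exact pow_card_eq_one'
  have hpow : ∀ σ : Γ, ∃ k : ℕ, γ ^ k = σ := by
    intro σ
    have hz : σ ∈ Subgroup.zpowers γ := by rw [hgen]; trivial
    exact mem_powers_iff_mem_zpowers.mpr hz
  have key2 : ∀ (k : ℕ) (α : Fin r → ℤ_[p]),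
      π (fun j => MonoidAlgebra.single (γ ^ k) (α j)) =
        Submodule.Quotient.mk
          ((((v⁻¹ : Matrix.GeneralLinearGroup (Fin r) ℤ_[p])
            : Matrix (Fin r) (Fin r) ℤ_[p]) ^ k).mulVec α) := by
    intro k α
    have h := hπ α (k : ℤ)
    rw [zpow_natCast] at h
    have hmat : ((v ^ (-(k : ℤ)) : Matrix.GeneralLinearGroup (Fin r) ℤ_[p]) :
        Matrix (Fin r) (Fin r) ℤ_[p]) =
        (((v⁻¹ : Matrix.GeneralLinearGroup (Fin r) ℤ_[p])
          : Matrix (Fin r) (Fin r) ℤ_[p])) ^ k := by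
      rw [zpow_neg, zpow_natCast, ← inv_pow, Units.val_pow_eq_pow_val]
    rw [h, hmat]
  exact exact_sequence_group_ring_twist.aux γ hγd hpow
    (v : Matrix (Fin r) (Fin r) ℤ_[p])
    ((v⁻¹ : Matrix.GeneralLinearGroup (Fin r) ℤ_[p]) : Matrix (Fin r) (Fin r) ℤ_[p])
    v.mul_inv v.inv_mul hdet W hW μ hμ π key2
end

section
/- Let p be a prime, n ≥ 1, q = p^n, and let R = W(F_q) be the ring of p-typical Witt vectors of the field F_q with q elements (the ring of integers of the unramified extension of Q_p of degree n), with Frobenius automorphism φ : R → R (the unique ring automorphism inducing x ↦ x^p on F_q; φ^n = id). Let x ∈ R be such that (x, φ(x), …, φ^{n−1}(x)) is a Z_p-basis of R as a Z_p-module, and let u ∈ GL_r(Z_p) satisfy u^n ≡ 1 (mod p·M_r(Z_p)). Then the matrix E := Σ_{i=0}^{n−1} φ^i(x)·u^{−i} ∈ M_r(R) is invertible, i.e. E ∈ GL_r(R). -/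
/-!
Reduce modulo `p`: a matrix over `W(F_q)` is invertible once its reduction is, and `E` reduces to
`∑ x₀^{pⁱ} Āⁱ` with `x₀ = x mod p` and `Āⁿ = 1`. If this kills a vector `v`, then for each
coordinate `t` the `n`-periodic sequence `s j = (Āʲ v) t` satisfies `∑ᵢ x₀^{pⁱ} s (i + k) = 0` for
all `k`. Since the conjugates `x₀^{pⁱ}` span `F_q` over `F_p`, this gives `∑ₗ s l z^{pˡ} = 0` for
every `z ∈ F_q`, and Dedekind's independence of the Frobenius powers forces `s = 0`, so `v = 0`.
-/

open Finset Function

theorem Function.Periodic.sum_range_add {M : Type*} [AddCommMonoid M] {f : ℕ → M} {n : ℕ}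
    (hf : Periodic f n) (m : ℕ) : ∑ i ∈ range n, f (i + m) = ∑ i ∈ range n, f i := by
  induction m with
  | zero => simp
  | succ m ih =>
    rw [← ih]
    cases n with
    | zero => simp
    | succ k =>
      rw [sum_range_succ, sum_range_succ', zero_add, add_comm, ← hf m]
      simp only [add_comm, add_left_comm]

namespace FiniteField

variable {K L : Type*} [Field K] [Fintype K] [Field L] [Algebra K L] [Finite L]

variable (K) in
theorem coe_frobeniusAlgHom_pow {R : Type*} [CommRing R] [Algebra K R] (l : ℕ) :
    ⇑(frobeniusAlgHom K R ^ l) = (· ^ Fintype.card K ^ l) := by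
  rw [AlgHom.coe_pow, coe_frobeniusAlgHom, pow_iterate]

theorem linearIndependent_pow_card_pow :
    LinearIndependent L
      fun (l : Fin (Module.finrank K L)) (z : L) => z ^ Fintype.card K ^ (l : ℕ) := by
  have hinj : Injective fun l : Fin (Module.finrank K L) =>
      ((frobeniusAlgHom K L ^ (l : ℕ) : L →ₐ[K] L) : L →* L) := fun a b h =>
    (bijective_frobeniusAlgHom_pow K L).1 (AlgHom.ext (DFunLike.congr_fun h :))
  have hfun : (fun (l : Fin (Module.finrank K L)) (z : L) => z ^ Fintype.card K ^ (l : ℕ)) =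
      (fun f : L →* L => (f : L → L)) ∘ fun l : Fin (Module.finrank K L) =>
        ((frobeniusAlgHom K L ^ (l : ℕ) : L →ₐ[K] L) : L →* L) := by
    funext l z
    exact (congrFun (coe_frobeniusAlgHom_pow K (l : ℕ)) z).symm
  rw [hfun]
  exact (linearIndependent_monoidHom L L).comp _ hinj

theorem pow_card_pow_add_of_finrank_eq {n : ℕ} (hn : Module.finrank K L = n) (z : L) (i : ℕ) :
    z ^ Fintype.card K ^ (i + n) = z ^ Fintype.card K ^ i := by
  have := Fintype.ofFinite L
  rw [pow_add, pow_mul, ← hn, ← Module.card_eq_pow_finrank, pow_card]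

theorem eq_zero_of_sum_pow_card_pow_mul_shift_eq_zero {x : L} {n : ℕ}
    (hn : Module.finrank K L = n)
    (hx : Submodule.span K (Set.range fun i : Fin n => x ^ Fintype.card K ^ (i : ℕ)) = ⊤)
    {s : ℕ → L} (hs : Periodic s n)
    (h : ∀ k, ∑ i ∈ range n, x ^ Fintype.card K ^ i * s (i + k) = 0) (j : ℕ) : s j = 0 := by
  have hn0 : 0 < n := hn ▸ Module.finrank_pos
  have hcorr : ∀ m, ∑ l ∈ range n, s l * x ^ Fintype.card K ^ (l + m) = 0 := by
    intro m
    have hper : Periodic (fun i => x ^ Fintype.card K ^ i * s (i + (n - 1) * m)) n := fun i => by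
      simp only [pow_card_pow_add_of_finrank_eq hn, add_right_comm i n, hs _]
    rw [← h ((n - 1) * m), ← hper.sum_range_add m]
    refine sum_congr rfl fun l _ => ?_
    have hlm : l + m + (n - 1) * m = l + m • n := by
      obtain ⟨k, rfl⟩ := Nat.exists_eq_add_of_lt hn0
      rw [smul_eq_mul, Nat.zero_add, Nat.add_sub_cancel]
      ring
    rw [mul_comm, hlm, hs.nsmul m l]
  have hdual : ∀ z : L, ∑ l : Fin n, s l * z ^ Fintype.card K ^ (l : ℕ) = 0 := by
    intro z
    obtain ⟨c, rfl⟩ :=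
      (Submodule.mem_span_range_iff_exists_fun K).mp (hx ▸ Submodule.mem_top (x := z))
    have hfrob : ∀ l, (∑ i, c i • x ^ Fintype.card K ^ (i : ℕ)) ^ Fintype.card K ^ l =
        ∑ i, c i • x ^ Fintype.card K ^ (l + (i : ℕ)) := by
      intro l
      rw [← congrFun (coe_frobeniusAlgHom_pow K l), map_sum]
      simp only [map_smul, coe_frobeniusAlgHom_pow, ← pow_mul', ← pow_add]
    calc ∑ l : Fin n, s l * (∑ i, c i • x ^ Fintype.card K ^ (i : ℕ)) ^ Fintype.card K ^ (l : ℕ)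
        = ∑ i, c i • ∑ l ∈ range n, s l * x ^ Fintype.card K ^ (l + i) := by
          simp_rw [hfrob, mul_sum, mul_smul_comm, smul_sum]
          rw [sum_comm]
          exact sum_congr rfl fun i _ =>
            Fin.sum_univ_eq_sum_range (fun l => c i • (s l * x ^ Fintype.card K ^ (l + i))) n
      _ = 0 := by simp only [hcorr, smul_zero, sum_const_zero]
  subst hn
  have hlin := Fintype.linearIndependent_iff.mp (linearIndependent_pow_card_pow (K := K) (L := L))
    (fun l => s l) (funext fun z => by
      rw [Finset.sum_apply]
      exact hdual z)
  rw [← hs.map_mod_nat]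
  exact hlin ⟨j % _, Nat.mod_lt _ hn0⟩

end FiniteField

namespace Matrix

theorem isUnit_sum_smul_pow_of_pow_eq_one {K ι : Type*} [Field K] [Fintype ι]
    [DecidableEq ι] {A : Matrix ι ι K} {n : ℕ} (hA : A ^ n = 1) {e : ℕ → K}
    (he : ∀ s : ℕ → K, Periodic s n → (∀ k, ∑ i ∈ range n, e i * s (i + k) = 0) → ∀ j, s j = 0) :
    IsUnit (∑ i ∈ range n, e i • A ^ i) := by
  rw [isUnit_iff_isUnit_det, isUnit_iff_ne_zero]
  intro hdet
  obtain ⟨v, hv0, hv⟩ := exists_mulVec_eq_zero_iff.mpr hdet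
  refine hv0 (funext fun t => ?_)
  have hper : Periodic (fun j => (A ^ j *ᵥ v) t) n := fun j => by simp [pow_add, hA]
  have hcorr : ∀ k, ∑ i ∈ range n, e i * (A ^ (i + k) *ᵥ v) t = 0 := fun k => by
    have := congrFun (congrArg (fun w => A ^ k *ᵥ w) hv) t
    rw [mulVec_mulVec, Finset.mul_sum, sum_mulVec] at this
    simpa [mul_smul_comm, smul_mulVec, ← pow_add, add_comm k] using this
  simpa using he _ hper hcorr 0

theorem GeneralLinearGroup.map_eq_one_of_forall_sub_one_eq_mul {ι R S : Type*} [Fintype ι]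
    [DecidableEq ι] [CommRing R] [CommRing S] (f : R →+* S) {a : R} (ha : f a = 0) {g : GL ι R}
    (hg : ∀ i j, ∃ c, (g : Matrix ι ι R) i j - (1 : Matrix ι ι R) i j = a * c) :
    GeneralLinearGroup.map f g = 1 := by
  ext i j
  obtain ⟨c, hc⟩ := hg i j
  rw [GeneralLinearGroup.map_apply,
    ← sub_add_cancel ((g : Matrix ι ι R) i j) ((1 : Matrix ι ι R) i j), hc, map_add, map_mul, ha,
    zero_mul, zero_add, Units.val_one, one_apply, one_apply, apply_ite f, map_one, map_zero]

end Matrix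

namespace WittVector

variable {p : ℕ} [Fact p.Prime]

theorem coeff_zero_frobenius_iterate {R : Type*} [CommRing R] [CharP R p] (x : WittVector p R)
    (i : ℕ) : (frobenius^[i] x).coeff 0 = x.coeff 0 ^ p ^ i := by
  induction i with
  | zero => simp
  | succ i ih => rw [iterate_succ_apply', coeff_frobenius_charP, ih, ← pow_mul, pow_succ]

theorem isUnit_of_isUnit_map_constantCoeff {k ι : Type*} [Field k] [CharP k p] [Fintype ι]
    [DecidableEq ι] {M : Matrix ι ι (WittVector p k)} (h : IsUnit (M.map constantCoeff)) :
    IsUnit M := by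
  rw [Matrix.isUnit_iff_isUnit_det] at h ⊢
  rw [← RingHom.mapMatrix_apply, ← RingHom.map_det] at h
  exact isUnit_of_coeff_zero_ne_zero _ h.ne_zero

theorem span_range_coeff_zero_eq_top {F k ι : Type*} [CommRing F] [CommRing k] [Algebra F k]
    [Fintype ι] {b : ι → WittVector p k}
    (hb : ∀ y, ∃ c : ι → WittVector p F, y = ∑ i, map (algebraMap F k) (c i) * b i) :
    Submodule.span F (Set.range fun i => (b i).coeff 0) = ⊤ := by
  refine eq_top_iff.mpr fun z _ => (Submodule.mem_span_range_iff_exists_fun F).mpr ?_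
  obtain ⟨c, hc⟩ := hb (teichmuller p z)
  refine ⟨fun i => (c i).coeff 0, ?_⟩
  have := congrArg constantCoeff hc
  simp only [map_sum, map_mul, constantCoeff_apply, teichmuller_coeff_zero, map_coeff] at this
  simp [this, Algebra.smul_def]

end WittVector

theorem sum_frobenius_smul_uInvPow_isUnit_general
    {p n r : ℕ} [Fact p.Prime] (hn : 1 ≤ n)
    (x : WittVector p (GaloisField p n))
    (hbasis : ∀ y : WittVector p (GaloisField p n),
      ∃! c : Fin n → WittVector p (ZMod p),
        y = ∑ i : Fin n,
          WittVector.map (algebraMap (ZMod p) (GaloisField p n)) (c i)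
            * (⇑(WittVector.frobenius))^[(i : ℕ)] x)
    (u : Matrix.GeneralLinearGroup (Fin r) (WittVector p (ZMod p)))
    (hu : ∀ i j, ∃ c : WittVector p (ZMod p),
      ((u ^ n : Matrix.GeneralLinearGroup (Fin r) (WittVector p (ZMod p)))
          : Matrix (Fin r) (Fin r) (WittVector p (ZMod p))) i j
        - (1 : Matrix (Fin r) (Fin r) (WittVector p (ZMod p))) i j = p * c)
    (E : Matrix (Fin r) (Fin r) (WittVector p (GaloisField p n)))
    (hE : E = ∑ i ∈ Finset.range n,
      ((⇑(WittVector.frobenius))^[i] x) •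
        (((u⁻¹ ^ i : Matrix.GeneralLinearGroup (Fin r) (WittVector p (ZMod p)))
            : Matrix (Fin r) (Fin r) (WittVector p (ZMod p)))).map
          ⇑(WittVector.map (algebraMap (ZMod p) (GaloisField p n)))) :
    IsUnit E := by
  let σ : WittVector p (ZMod p) →+* GaloisField p n :=
    WittVector.constantCoeff.comp (WittVector.map (algebraMap (ZMod p) (GaloisField p n)))
  let ū := Matrix.GeneralLinearGroup.map σ u
  have hū : ū ^ n = 1 := by
    rw [← map_pow]
    exact Matrix.GeneralLinearGroup.map_eq_one_of_forall_sub_one_eq_mul σ (by simp [σ]) hu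
  have hspan : Submodule.span (ZMod p)
      (Set.range fun i : Fin n => x.coeff 0 ^ p ^ (i : ℕ)) = ⊤ := by
    simpa only [WittVector.coeff_zero_frobenius_iterate] using
      WittVector.span_range_coeff_zero_eq_top fun y => (hbasis y).exists
  have hred : E.map WittVector.constantCoeff = ∑ i ∈ range n, (x.coeff 0 ^ p ^ i) •
      ((ū⁻¹ : GL (Fin r) (GaloisField p n)) : Matrix (Fin r) (Fin r) (GaloisField p n)) ^ i := by
    subst hE
    ext a b
    simp only [Matrix.map_apply, Matrix.sum_apply, Matrix.smul_apply, smul_eq_mul, map_sum, map_mul,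
      ← Units.val_pow_eq_pow_val, ← map_inv, ← map_pow, Matrix.GeneralLinearGroup.map_apply, ū, σ,
      WittVector.constantCoeff_apply, WittVector.coeff_zero_frobenius_iterate, RingHom.comp_apply]
  refine WittVector.isUnit_of_isUnit_map_constantCoeff (hred ▸ ?_)
  refine Matrix.isUnit_sum_smul_pow_of_pow_eq_one ?_ fun s hs h => ?_
  · rw [← Units.val_pow_eq_pow_val, inv_pow, hū, inv_one, Units.val_one]
  · exact FiniteField.eq_zero_of_sum_pow_card_pow_mul_shift_eq_zero (K := ZMod p)
      (GaloisField.finrank p (by omega)) (by rwa [ZMod.card]) hs (by rwa [ZMod.card])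

/-- Let `R = W(F_q)`, `q = pⁿ`, with Frobenius `φ`. If
`(x, φx, …, φ^{n−1}x)` is a `ℤ_p`-basis of `R` (every element is uniquely a
`ℤ_p = W(F_p)`-linear combination of the `φⁱx`) and `u ∈ GL_r(ℤ_p)` satisfies
`uⁿ ≡ 1 (mod p)`, then `E = ∑_{i=0}^{n−1} φⁱ(x)·u^{−i} ∈ M_r(R)` is invertible. -/
theorem sum_frobenius_smul_uInvPow_isUnit
    {p n r : ℕ} [Fact p.Prime] (hn : 1 ≤ n) (hr : 1 ≤ r)
    (x : WittVector p (GaloisField p n))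
    (hbasis : ∀ y : WittVector p (GaloisField p n),
      ∃! c : Fin n → WittVector p (ZMod p),
        y = ∑ i : Fin n,
          WittVector.map (algebraMap (ZMod p) (GaloisField p n)) (c i)
            * (⇑(WittVector.frobenius))^[(i : ℕ)] x)
    (u : Matrix.GeneralLinearGroup (Fin r) (WittVector p (ZMod p)))
    (hu : ∀ i j, ∃ c : WittVector p (ZMod p),
      ((u ^ n : Matrix.GeneralLinearGroup (Fin r) (WittVector p (ZMod p)))
          : Matrix (Fin r) (Fin r) (WittVector p (ZMod p))) i j
        - (1 : Matrix (Fin r) (Fin r) (WittVector p (ZMod p))) i j = p * c)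
    (E : Matrix (Fin r) (Fin r) (WittVector p (GaloisField p n)))
    (hE : E = ∑ i ∈ Finset.range n,
      ((⇑(WittVector.frobenius))^[i] x) •
        (((u⁻¹ ^ i : Matrix.GeneralLinearGroup (Fin r) (WittVector p (ZMod p)))
            : Matrix (Fin r) (Fin r) (WittVector p (ZMod p)))).map
          ⇑(WittVector.map (algebraMap (ZMod p) (GaloisField p n)))) :
    IsUnit E :=
  sum_frobenius_smul_uInvPow_isUnit_general hn x hbasis u hu E hE
end
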